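/- arXiv:2409.12552 — 7 statements merged into one kernel-verified Lean document; each statement's English description precedes it below -/
import Mathlib

section
/- Let n ≥ 5 and let φ and ψ be endomorphisms of A[B_n], each of which is of one of the explicit types (1), (2a), (2b), (3). If φ = conj_x ∘ ψ for some x ∈ A[B_n], then φ and ψ are of the same type; moreover, if this common type is (2a), (2b) or (3), then the parameters of φ and ψ coincide (the same ε and p, q in types (2a), (2b); the same ε, k, p, q, r, s in type (3)). -/
/-- The defining relators of the Artin group of type `Bₙ`, as elements of the free
group on `n` generators (0-indexed: generator `i` corresponds to `r_{i+1}`). -/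
def BnRels (n : ℕ) : Set (FreeGroup (Fin n)) :=
  {w | (∃ i j : Fin n, (i : ℕ) + 1 = (j : ℕ) ∧ (j : ℕ) + 1 < n ∧
          w = FreeGroup.of i * FreeGroup.of j * FreeGroup.of i *
              (FreeGroup.of j * FreeGroup.of i * FreeGroup.of j)⁻¹) ∨
       (∃ i j : Fin n, (i : ℕ) + 2 = n ∧ (j : ℕ) + 1 = n ∧
          w = FreeGroup.of i * FreeGroup.of j * FreeGroup.of i * FreeGroup.of j *
              (FreeGroup.of j * FreeGroup.of i * FreeGroup.of j * FreeGroup.of i)⁻¹) ∨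
       (∃ i j : Fin n, (i : ℕ) + 2 ≤ (j : ℕ) ∧
          w = FreeGroup.of i * FreeGroup.of j * (FreeGroup.of j * FreeGroup.of i)⁻¹)}

/-- The Artin group `A[Bₙ]` of type `Bₙ`. -/
abbrev ArtinB (n : ℕ) := PresentedGroup (BnRels n)

/-- The standard generator `r_i` (1-indexed, `1 ≤ i ≤ n`). -/
def rB (n i : ℕ) : ArtinB n :=
  if h : i - 1 < n then PresentedGroup.of ⟨i - 1, h⟩ else 1

/-- `ρ_B = r_1 r_2 ⋯ r_n`. -/
def ρB (n : ℕ) : ArtinB n := ((List.range n).map fun i => rB n (i + 1)).prod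

/-- `Δ_B = ρ_B ^ n`, the generator of the center. -/
def ΔB (n : ℕ) : ArtinB n := ρB n ^ n

/-- `t_i` for `i` read modulo `n`: `t_i = r_i` for `1 ≤ i ≤ n-1`,
and `t_0 = ρ_B r_{n-1} ρ_B⁻¹`. -/
def tB (n i : ℕ) : ArtinB n :=
  if i % n = 0 then ρB n * rB n (n - 1) * (ρB n)⁻¹ else rB n (i % n)

/-- `Δ_Y = (t_1⋯t_{n-1})(t_1⋯t_{n-2})⋯(t_1t_2)t_1`, the Garside element of the
parabolic subgroup of type `A_{n-1}`. -/
def ΔY (n : ℕ) : ArtinB n :=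
  ((List.range (n - 1)).map fun k =>
    ((List.range (n - 1 - k)).map fun i => rB n (i + 1)).prod).prod

/-- `ρ_0 = t_1 t_2 ⋯ t_{n-1}`. -/
def ρ₀B (n : ℕ) : ArtinB n := ((List.range (n - 1)).map fun i => rB n (i + 1)).prod

/-- `ρ_1 = t_1⁻¹ t_2⁻¹ ⋯ t_{n-1}⁻¹`. -/
def ρ₁B (n : ℕ) : ArtinB n := ((List.range (n - 1)).map fun i => (rB n (i + 1))⁻¹).prod

/-- `ρ_k` for `k ∈ {0,1}`. -/
def ρkB (n k : ℕ) : ArtinB n := if k = 0 then ρ₀B n else ρ₁B n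

/-- `v_k = ρ_k t_{n-1} ρ_k⁻¹` for `k ∈ {0,1}`. -/
def vB (n k : ℕ) : ArtinB n := ρkB n k * rB n (n - 1) * (ρkB n k)⁻¹

/-- `δ = r_{n-1} r_{n-2} ⋯ r_2 r_1² r_2 ⋯ r_{n-2} r_{n-1}`. -/
def δB (n : ℕ) : ArtinB n :=
  ((List.range (n - 2)).map fun i => rB n (n - 1 - i)).prod * rB n 1 ^ 2 *
  ((List.range (n - 2)).map fun i => rB n (i + 2)).prod

/-- The quotient `Ā = A[Bₙ]/Z(A[Bₙ])`. -/
abbrev AbarB (n : ℕ) := ArtinB n ⧸ Subgroup.center (ArtinB n)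

/-- The canonical projection `π : A[Bₙ] → Ā`. -/
def πB (n : ℕ) : ArtinB n →* AbarB n := QuotientGroup.mk' (Subgroup.center (ArtinB n))

/-- `t̄_i = π(t_i)`. -/
def tbar (n i : ℕ) : AbarB n := πB n (tB n i)

/-- `ρ̄_B = π(ρ_B)`. -/
def ρbar (n : ℕ) : AbarB n := πB n (ρB n)

/-- The composition `conj_x ∘ φ` of an endomorphism with an inner automorphism. -/
def conjComp {G : Type*} [Group G] (x : G) (φ : G →* G) : G →* G :=
  (MulAut.conj x).toMonoidHom.comp φ

/-- Type (1): there are commuting `g, h` with `φ(t_i) = g` for all `0 ≤ i ≤ n-1`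
and `φ(ρ_B) = h`. -/
def IsType1 (n : ℕ) (φ : ArtinB n →* ArtinB n) : Prop :=
  ∃ g h : ArtinB n, g * h = h * g ∧ (∀ i < n, φ (tB n i) = g) ∧ φ (ρB n) = h

/-- Type (2a) with parameters `ε ∈ {1,-1}`, `p q : ℤ`. -/
def IsType2a (n : ℕ) (ε p q : ℤ) (φ : ArtinB n →* ArtinB n) : Prop :=
  (ε = 1 ∨ ε = -1) ∧ (∀ i < n, φ (tB n i) = tB n i ^ ε * ΔB n ^ p) ∧
    φ (ρB n) = ρB n * ΔB n ^ q

/-- Type (2b) with parameters `ε ∈ {1,-1}`, `p q : ℤ`. -/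
def IsType2b (n : ℕ) (ε p q : ℤ) (φ : ArtinB n →* ArtinB n) : Prop :=
  (ε = 1 ∨ ε = -1) ∧ (∀ i < n, φ (tB n i) = tB n (n - i) ^ ε * ΔB n ^ p) ∧
    φ (ρB n) = (ρB n)⁻¹ * ΔB n ^ q

/-- Type (3) with parameters `ε ∈ {1,-1}`, `k ∈ {0,1}`, `p q r s : ℤ`. -/
def IsType3 (n : ℕ) (ε : ℤ) (k : ℕ) (p q r s : ℤ) (φ : ArtinB n →* ArtinB n) : Prop :=
  (ε = 1 ∨ ε = -1) ∧ (k = 0 ∨ k = 1) ∧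
    (∀ i, 1 ≤ i → i ≤ n - 1 → φ (tB n i) = tB n i ^ ε * ΔY n ^ (2 * p) * ΔB n ^ q) ∧
    φ (tB n 0) = vB n k ^ ε * ΔY n ^ (2 * p) * ΔB n ^ q ∧
    φ (ρB n) = ρkB n k * ΔY n ^ (2 * r) * ΔB n ^ s

open Multiplicative in
/-- Homomorphism to `Multiplicative ℤ` from exponent data. -/
def expHom (n : ℕ) (c : ℕ → ℤ)
    (hc : ∀ i j : ℕ, i + 1 = j → j + 1 < n → c i = c j) :
    ArtinB n →* Multiplicative ℤ :=
  PresentedGroup.toGroup (rels := BnRels n) (f := fun i : Fin n => ofAdd (c i.val)) (by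
    intro r hr
    obtain ⟨i, j, hij, hjn, rfl⟩ | ⟨i, j, hij, hjn, rfl⟩ | ⟨i, j, hij, rfl⟩ := hr <;>
      [skip; skip; skip] <;>
      · simp only [map_mul, map_inv, FreeGroup.lift_apply_of]
        rw [← toAdd_eq_zero]
        simp only [toAdd_mul, toAdd_inv, toAdd_ofAdd]
        first
        | (have := hc i j hij hjn; omega)
        | omega)

open Multiplicative in
theorem expHom_of (n : ℕ) (c : ℕ → ℤ) (hc : ∀ i j : ℕ, i + 1 = j → j + 1 < n → c i = c j)
    (i : Fin n) : expHom n c hc (PresentedGroup.of i) = ofAdd (c i) := by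
  unfold expHom; exact PresentedGroup.toGroup.of _

open Multiplicative

variable {n : ℕ} {c : ℕ → ℤ} {hc : ∀ i j : ℕ, i + 1 = j → j + 1 < n → c i = c j}

theorem prod_ofAdd (c : ℕ → ℤ) (m : ℕ) :
    (((List.range m).map fun i => ofAdd (c i)) : List (Multiplicative ℤ)).prod
      = ofAdd (∑ i ∈ Finset.range m, c i) := by
  induction m with
  | zero => simp
  | succ m ih =>
      rw [List.range_succ, List.map_append, List.prod_append, ih, Finset.sum_range_succ,
        ofAdd_add]
      simp

theorem expHom_rB {i : ℕ} (h1 : 1 ≤ i) (h2 : i ≤ n) :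
    expHom n c hc (rB n i) = ofAdd (c (i - 1)) := by
  rw [rB, dif_pos (by omega)]
  exact expHom_of n c hc _

theorem expHom_prod (m : ℕ) (hm : m ≤ n) :
    expHom n c hc (((List.range m).map fun i => rB n (i + 1)).prod)
      = ofAdd (∑ i ∈ Finset.range m, c i) := by
  rw [map_list_prod, List.map_map, ← prod_ofAdd c m]
  congr 1
  apply List.map_congr_left
  intro a ha
  simp only [List.mem_range] at ha
  simp only [Function.comp_apply]
  rw [expHom_rB (by omega) (by omega)]
  simp

theorem expHom_prod_inv (m : ℕ) (hm : m ≤ n) :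
    expHom n c hc (((List.range m).map fun i => (rB n (i + 1))⁻¹).prod)
      = ofAdd (-∑ i ∈ Finset.range m, c i) := by
  rw [map_list_prod, List.map_map]
  have : ∑ i ∈ Finset.range m, (-c i) = -∑ i ∈ Finset.range m, c i := by
    simp [Finset.sum_neg_distrib]
  rw [← this, ← prod_ofAdd (fun i => -c i) m]
  congr 1
  apply List.map_congr_left
  intro a ha
  simp only [List.mem_range] at ha
  simp only [Function.comp_apply, map_inv]
  rw [expHom_rB (by omega) (by omega), ← ofAdd_neg]
  simp

theorem expHom_ρB (hn : 1 ≤ n) :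
    expHom n c hc (ρB n) = ofAdd (∑ i ∈ Finset.range n, c i) := expHom_prod n le_rfl

theorem expHom_ΔB (hn : 1 ≤ n) :
    expHom n c hc (ΔB n) = ofAdd (n * ∑ i ∈ Finset.range n, c i) := by
  rw [ΔB, map_pow, expHom_ρB hn, ← ofAdd_nsmul]
  simp [nsmul_eq_mul]

theorem expHom_ρ₀B : expHom n c hc (ρ₀B n) = ofAdd (∑ i ∈ Finset.range (n-1), c i) :=
  expHom_prod (n-1) (by omega)

theorem expHom_ρ₁B : expHom n c hc (ρ₁B n) = ofAdd (-∑ i ∈ Finset.range (n-1), c i) :=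
  expHom_prod_inv (n-1) (by omega)

theorem expHom_tB (hn : 2 ≤ n) {i : ℕ} (h1 : 1 ≤ i) (h2 : i ≤ n - 1) :
    expHom n c hc (tB n i) = ofAdd (c (i - 1)) := by
  have h' : ¬ (i % n = 0) := by
    rw [Nat.mod_eq_of_lt (by omega)]; omega
  rw [tB, if_neg h', Nat.mod_eq_of_lt (by omega)]
  exact expHom_rB h1 (by omega)

theorem expHom_tB0 (hn : 2 ≤ n) :
    expHom n c hc (tB n 0) = ofAdd (c (n - 2)) := by
  have h' : (0 : ℕ) % n = 0 := Nat.zero_mod n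
  rw [tB, if_pos h']
  simp only [map_mul, map_inv]
  rw [expHom_rB (by omega) (by omega), mul_comm (expHom n c hc (ρB n))]
  rw [mul_inv_cancel_right]
  congr 1

theorem expHom_vB (hn : 2 ≤ n) (k : ℕ) :
    expHom n c hc (vB n k) = ofAdd (c (n - 2)) := by
  rw [vB]
  simp only [map_mul, map_inv]
  rw [expHom_rB (by omega) (by omega), mul_comm (expHom n c hc (ρkB n k))]
  rw [mul_inv_cancel_right]
  congr 1

theorem expHom_ΔY (hn : 1 ≤ n) :
    expHom n c hc (ΔY n)
      = ofAdd (∑ k ∈ Finset.range (n-1), ∑ i ∈ Finset.range (n-1-k), c i) := by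
  rw [ΔY, map_list_prod, List.map_map, ← prod_ofAdd (fun k => ∑ i ∈ Finset.range (n-1-k), c i)]
  congr 1
  apply List.map_congr_left
  intro a ha
  simp only [List.mem_range] at ha
  simp only [Function.comp_apply]
  exact expHom_prod (n-1-a) (by omega)

theorem swap_braid_aux (a : ℕ) :
    Equiv.swap a (a+1) * Equiv.swap (a+1) (a+2) * Equiv.swap a (a+1)
      = Equiv.swap (a+1) (a+2) * Equiv.swap a (a+1) * Equiv.swap (a+1) (a+2) := by
  have h1 := Equiv.swap_apply_apply (Equiv.swap a (a+1)) (a+1) (a+2)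
  have h2 := Equiv.swap_apply_apply (Equiv.swap (a+1) (a+2)) a (a+1)
  rw [Equiv.swap_apply_right, Equiv.swap_apply_of_ne_of_ne (by omega) (by omega),
    Equiv.swap_inv] at h1
  rw [Equiv.swap_apply_left, Equiv.swap_apply_of_ne_of_ne (by omega) (by omega),
    Equiv.swap_inv] at h2
  rw [← h1, ← h2, Equiv.swap_comm a (a+2)]

theorem swap_comm_aux (a b : ℕ) (h : a + 1 < b) :
    Equiv.swap a (a+1) * Equiv.swap b (b+1) = Equiv.swap b (b+1) * Equiv.swap a (a+1) := by
  have key := Equiv.swap_apply_apply (Equiv.swap a (a+1)) b (b+1)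
  rw [Equiv.swap_apply_of_ne_of_ne (by omega) (by omega),
    Equiv.swap_apply_of_ne_of_ne (by omega) (by omega), Equiv.swap_inv] at key
  conv_rhs => rw [key]
  rw [mul_assoc, mul_assoc, Equiv.swap_mul_self, mul_one]

/-- The canonical projection of `A[Bₙ]` to the symmetric group (on `ℕ` for convenience),
killing the last generator. -/
def permHom (n : ℕ) : ArtinB n →* Equiv.Perm ℕ :=
  PresentedGroup.toGroup (rels := BnRels n)
    (f := fun i : Fin n => if (i : ℕ) + 1 < n then Equiv.swap i.val (i.val + 1) else 1) (by
    intro r hr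
    obtain ⟨i, j, hij, hjn, rfl⟩ | ⟨i, j, hij, hjn, rfl⟩ | ⟨i, j, hij, rfl⟩ := hr
    · simp only [map_mul, map_inv, FreeGroup.lift_apply_of]
      rw [if_pos (by omega), if_pos (by omega), ← hij]
      have : (i : ℕ) + 1 + 1 = (i : ℕ) + 2 := by omega
      rw [this, swap_braid_aux]
      group
    · simp only [map_mul, map_inv, FreeGroup.lift_apply_of]
      rw [if_pos (by omega), if_neg (by omega)]
      group
    · simp only [map_mul, map_inv, FreeGroup.lift_apply_of]
      by_cases hj : (j : ℕ) + 1 < n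
      · rw [if_pos (by omega), if_pos hj, swap_comm_aux _ _ (by omega)]
        group
      · rw [if_neg hj]
        group)

theorem permHom_rB {n i : ℕ} (h1 : 1 ≤ i) (h2 : i ≤ n - 1) (hn : 2 ≤ n) :
    permHom n (rB n i) = Equiv.swap (i-1) i := by
  rw [rB, dif_pos (by omega)]
  unfold permHom
  rw [PresentedGroup.toGroup.of]
  simp only [Fin.val_mk]
  rw [if_pos (by omega)]
  congr 1
  omega

theorem permHom_tB {n i : ℕ} (h1 : 1 ≤ i) (h2 : i ≤ n - 1) (hn : 2 ≤ n) :
    permHom n (tB n i) = Equiv.swap (i-1) i := by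
  have h' : ¬ (i % n = 0) := by
    rw [Nat.mod_eq_of_lt (by omega)]; omega
  rw [tB, if_neg h', Nat.mod_eq_of_lt (by omega)]
  exact permHom_rB h1 h2 hn

theorem tB_one_ne_two {n : ℕ} (hn : 5 ≤ n) : tB n 1 ≠ tB n 2 := by
  intro h
  have h1 := permHom_tB (n := n) (i := 1) le_rfl (by omega) (by omega)
  have h2 := permHom_tB (n := n) (i := 2) (by omega) (by omega) (by omega)
  rw [h, h2] at h1
  have := congrArg (fun e : Equiv.Perm ℕ => e 0) h1
  rw [Equiv.swap_apply_of_ne_of_ne (by omega) (by omega)] at this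
  rw [show (1:ℕ) - 1 = 0 from rfl, Equiv.swap_apply_left] at this
  omega

theorem tB_last_ne {n : ℕ} (hn : 5 ≤ n) : tB n (n-1) ≠ tB n (n-2) := by
  intro h
  have h1 := permHom_tB (n := n) (i := n-1) (by omega) le_rfl (by omega)
  have h2 := permHom_tB (n := n) (i := n-2) (by omega) (by omega) (by omega)
  rw [h, h2] at h1
  have := congrArg (fun e : Equiv.Perm ℕ => e (n-1)) h1
  rw [Equiv.swap_apply_of_ne_of_ne (by omega) (by omega),
    Equiv.swap_apply_right] at this
  omega

/-- coefficient function counting occurrences of `r_1, …, r_{n-1}`. -/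
def cA (n : ℕ) : ℕ → ℤ := fun i => if i + 1 = n then 0 else 1
/-- coefficient function counting occurrences of `r_n`. -/
def cB (n : ℕ) : ℕ → ℤ := fun i => if i + 1 = n then 1 else 0

theorem cA_spec (n : ℕ) : ∀ i j : ℕ, i + 1 = j → j + 1 < n → cA n i = cA n j := by
  intro i j hij hjn
  simp only [cA, if_neg (by omega : ¬ i + 1 = n), if_neg (by omega : ¬ j + 1 = n)]

theorem cB_spec (n : ℕ) : ∀ i j : ℕ, i + 1 = j → j + 1 < n → cB n i = cB n j := by
  intro i j hij hjn
  simp only [cB, if_neg (by omega : ¬ i + 1 = n), if_neg (by omega : ¬ j + 1 = n)]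

/-- The "Artin-length" abelianization character. -/
def α1 (n : ℕ) : ArtinB n →* Multiplicative ℤ := expHom n (cA n) (cA_spec n)
/-- The "last-letter" abelianization character. -/
def α2 (n : ℕ) : ArtinB n →* Multiplicative ℤ := expHom n (cB n) (cB_spec n)

theorem sum_cA {n m : ℕ} (hm : m ≤ n - 1) : ∑ i ∈ Finset.range m, cA n i = (m : ℤ) := by
  rw [Finset.sum_congr rfl (fun i hi => ?_), Finset.sum_const, nsmul_eq_mul, mul_one,
    Finset.card_range]
  simp only [Finset.mem_range] at hi
  exact if_neg (by omega)

theorem sum_cB {n m : ℕ} (hm : m ≤ n - 1) : ∑ i ∈ Finset.range m, cB n i = 0 := by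
  rw [Finset.sum_congr rfl (fun i hi => ?_), Finset.sum_const, smul_zero]
  simp only [Finset.mem_range] at hi
  exact if_neg (by omega)

theorem sum_cA_full {n : ℕ} (hn : 1 ≤ n) :
    ∑ i ∈ Finset.range n, cA n i = (n : ℤ) - 1 := by
  have hn' : n - 1 + 1 = n := by omega
  have hsplit := Finset.sum_range_succ (cA n) (n-1)
  rw [hn'] at hsplit
  rw [hsplit, sum_cA le_rfl, show cA n (n-1) = 0 from if_pos (by omega)]
  push_cast
  omega

theorem sum_cB_full {n : ℕ} (hn : 1 ≤ n) :
    ∑ i ∈ Finset.range n, cB n i = 1 := by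
  have hn' : n - 1 + 1 = n := by omega
  have hsplit := Finset.sum_range_succ (cB n) (n-1)
  rw [hn'] at hsplit
  rw [hsplit, sum_cB le_rfl, show cB n (n-1) = 1 from if_pos (by omega), zero_add]

theorem gauss_aux (m : ℕ) :
    (∑ k ∈ Finset.range m, ((m - k : ℕ) : ℤ)) * 2 = (m + 1) * m := by
  have h1 : ∑ k ∈ Finset.range m, (m - k : ℕ) = ∑ k ∈ Finset.range (m+1), k := by
    have e1 : ∑ k ∈ Finset.range (m+1), (m - k) = ∑ k ∈ Finset.range (m+1), k := by
      simpa using Finset.sum_range_reflect (fun j => j) (m + 1)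
    have e2 : ∑ k ∈ Finset.range (m+1), (m - k)
        = (∑ k ∈ Finset.range m, (m - k)) + 0 := by
      rw [Finset.sum_range_succ, Nat.sub_self]
    omega
  have h2 : (∑ k ∈ Finset.range (m+1), k) * 2 = (m + 1) * m := by
    rw [Finset.sum_range_id_mul_two]
    simp
  have h3 : ((∑ k ∈ Finset.range m, (m - k : ℕ) : ℕ) : ℤ)
      = ∑ k ∈ Finset.range m, ((m - k : ℕ) : ℤ) := Nat.cast_sum _ _
  rw [← h3, h1]
  exact_mod_cast h2

open Multiplicative

theorem mult_eq_of_toAdd {a b : Multiplicative ℤ} (h : a.toAdd = b.toAdd) : a = b := h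

theorem α1_tB' {n i : ℕ} (hn : 5 ≤ n) (h1 : 1 ≤ i) (h2 : i ≤ n - 1) :
    α1 n (tB n i) = ofAdd 1 := by
  rw [α1, expHom_tB (by omega) h1 h2, show cA n (i-1) = 1 from if_neg (by omega)]

theorem α2_tB' {n i : ℕ} (hn : 5 ≤ n) (h1 : 1 ≤ i) (h2 : i ≤ n - 1) :
    α2 n (tB n i) = ofAdd 0 := by
  rw [α2, expHom_tB (by omega) h1 h2, show cB n (i-1) = 0 from if_neg (by omega)]

theorem α1_tB0 {n : ℕ} (hn : 5 ≤ n) : α1 n (tB n 0) = ofAdd 1 := by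
  rw [α1, expHom_tB0 (by omega), show cA n (n-2) = 1 from if_neg (by omega)]

theorem α2_tB0 {n : ℕ} (hn : 5 ≤ n) : α2 n (tB n 0) = ofAdd 0 := by
  rw [α2, expHom_tB0 (by omega), show cB n (n-2) = 0 from if_neg (by omega)]

theorem α1_vB {n : ℕ} (hn : 5 ≤ n) (k : ℕ) : α1 n (vB n k) = ofAdd 1 := by
  rw [α1, expHom_vB (by omega), show cA n (n-2) = 1 from if_neg (by omega)]

theorem α2_vB {n : ℕ} (hn : 5 ≤ n) (k : ℕ) : α2 n (vB n k) = ofAdd 0 := by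
  rw [α2, expHom_vB (by omega), show cB n (n-2) = 0 from if_neg (by omega)]

theorem α1_ρB {n : ℕ} (hn : 5 ≤ n) : α1 n (ρB n) = ofAdd ((n : ℤ) - 1) := by
  rw [α1, expHom_ρB (by omega), sum_cA_full (by omega)]

theorem α2_ρB {n : ℕ} (hn : 5 ≤ n) : α2 n (ρB n) = ofAdd 1 := by
  rw [α2, expHom_ρB (by omega), sum_cB_full (by omega)]

theorem α1_ΔB {n : ℕ} (hn : 5 ≤ n) : α1 n (ΔB n) = ofAdd ((n : ℤ) * ((n : ℤ) - 1)) := by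
  rw [α1, expHom_ΔB (by omega), sum_cA_full (by omega)]

theorem α2_ΔB {n : ℕ} (hn : 5 ≤ n) : α2 n (ΔB n) = ofAdd (n : ℤ) := by
  rw [α2, expHom_ΔB (by omega), sum_cB_full (by omega), mul_one]

theorem α1_ρkB {n k : ℕ} (hn : 5 ≤ n) :
    α1 n (ρkB n k) = ofAdd ((if k = 0 then 1 else -1) * ((n : ℤ) - 1)) := by
  rcases eq_or_ne k 0 with hk | hk
  · rw [hk, ρkB, if_pos rfl, if_pos rfl, α1, expHom_ρ₀B, sum_cA le_rfl, one_mul]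
    congr 1
    push_cast
    omega
  · rw [ρkB, if_neg hk, if_neg hk, α1, expHom_ρ₁B, sum_cA le_rfl]
    congr 1
    push_cast
    omega

theorem α2_ρkB {n k : ℕ} (hn : 5 ≤ n) : α2 n (ρkB n k) = ofAdd 0 := by
  rcases eq_or_ne k 0 with hk | hk
  · rw [hk, ρkB, if_pos rfl, α2, expHom_ρ₀B, sum_cB le_rfl]
  · rw [ρkB, if_neg hk, α2, expHom_ρ₁B, sum_cB le_rfl, neg_zero]

theorem α1_ΔY {n : ℕ} (hn : 5 ≤ n) :
    (α1 n (ΔY n)).toAdd * 2 = (n : ℤ) * ((n : ℤ) - 1) := by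
  rw [α1, expHom_ΔY (by omega)]
  have hinner : ∀ k ∈ Finset.range (n-1),
      ∑ i ∈ Finset.range (n-1-k), cA n i = ((n-1-k : ℕ) : ℤ) := by
    intro k hk
    exact sum_cA (by omega)
  rw [Finset.sum_congr rfl hinner, toAdd_ofAdd, gauss_aux (n-1)]
  have h1 : ((n - 1 : ℕ) : ℤ) = (n : ℤ) - 1 := by omega
  rw [h1]
  ring

theorem α2_ΔY {n : ℕ} (hn : 5 ≤ n) : α2 n (ΔY n) = ofAdd 0 := by
  rw [α2, expHom_ΔY (by omega)]
  have hinner : ∀ k ∈ Finset.range (n-1),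
      ∑ i ∈ Finset.range (n-1-k), cB n i = 0 :=
    fun k hk => sum_cB (by omega)
  rw [Finset.sum_congr rfl hinner, Finset.sum_const, smul_zero]

theorem n_cast_ne {n : ℕ} (hn : 5 ≤ n) : (n : ℤ) ≠ 0 := by
  exact_mod_cast (by omega : n ≠ 0)

theorem n_dvd_small {n : ℕ} (hn : 5 ≤ n) {w c : ℤ} (h : w * n = c)
    (h1 : -2 ≤ c) (h2 : c ≤ 2) : c = 0 := by
  have h5 : (5:ℤ) ≤ (n:ℤ) := by exact_mod_cast hn
  rcases lt_trichotomy w 0 with hw | hw | hw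
  · nlinarith [mul_le_mul_of_nonneg_right (show w ≤ -1 by omega)
      (show (0:ℤ) ≤ (n:ℤ) by linarith)]
  · rw [hw, zero_mul] at h
    omega
  · nlinarith [mul_le_mul_of_nonneg_right (show 1 ≤ w by omega)
      (show (0:ℤ) ≤ (n:ℤ) by linarith)]

theorem N_dvd_small {n : ℕ} (hn : 5 ≤ n) {w c : ℤ} (h : w * ((n:ℤ) * ((n:ℤ)-1)) = c)
    (h1 : -2 ≤ c) (h2 : c ≤ 2) : c = 0 := by
  have h5 : (5:ℤ) ≤ (n:ℤ) := by exact_mod_cast hn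
  have hN : (20:ℤ) ≤ (n:ℤ) * ((n:ℤ)-1) := by nlinarith
  rcases lt_trichotomy w 0 with hw | hw | hw
  · nlinarith [mul_le_mul_of_nonneg_right (show w ≤ -1 by omega)
      (show (0:ℤ) ≤ (n:ℤ) * ((n:ℤ)-1) by linarith)]
  · rw [hw, zero_mul] at h
    omega
  · nlinarith [mul_le_mul_of_nonneg_right (show 1 ≤ w by omega)
      (show (0:ℤ) ≤ (n:ℤ) * ((n:ℤ)-1) by linarith)]

theorem modn_eq {n : ℕ} (hn : 5 ≤ n) {a b u v : ℤ} (ha : -2 ≤ a - b) (hb : a - b ≤ 2)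
    (h : a + u * n = b + v * n) : a = b ∧ u = v := by
  have hc : (u - v) * (n:ℤ) = b - a := by ring_nf; linarith
  have h0 : b - a = 0 := n_dvd_small hn hc (by omega) (by omega)
  have hab : a = b := by omega
  refine ⟨hab, ?_⟩
  have huv : (u - v) * (n:ℤ) = 0 := by omega
  rcases mul_eq_zero.mp huv with h' | h'
  · omega
  · exact absurd h' (n_cast_ne hn)

theorem modN_eq {n : ℕ} (hn : 5 ≤ n) {a b u v : ℤ} (ha : -2 ≤ a - b) (hb : a - b ≤ 2)
    (h : a + u * ((n:ℤ) * ((n:ℤ)-1)) = b + v * ((n:ℤ) * ((n:ℤ)-1))) : a = b ∧ u = v := by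
  have hc : (u - v) * ((n:ℤ) * ((n:ℤ)-1)) = b - a := by ring_nf; linarith
  have h0 : b - a = 0 := N_dvd_small hn hc (by omega) (by omega)
  have hab : a = b := by omega
  refine ⟨hab, ?_⟩
  have h5 : (5:ℤ) ≤ (n:ℤ) := by exact_mod_cast hn
  have hNne : ((n:ℤ) * ((n:ℤ)-1)) ≠ 0 := by nlinarith
  have huv : (u - v) * ((n:ℤ) * ((n:ℤ)-1)) = 0 := by omega
  rcases mul_eq_zero.mp huv with h' | h'
  · omega
  · exact absurd h' hNne

open Multiplicative

theorem sig2a {n : ℕ} {ε p q : ℤ} {φ : ArtinB n →* ArtinB n} (hn : 5 ≤ n)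
    (h : IsType2a n ε p q φ) :
    α1 n (φ (tB n 1)) = ofAdd (ε + p * ((n:ℤ) * ((n:ℤ)-1)))
  ∧ α2 n (φ (tB n 1)) = ofAdd (p * (n:ℤ))
  ∧ α1 n (φ (ρB n)) = ofAdd (((n:ℤ)-1) + q * ((n:ℤ) * ((n:ℤ)-1)))
  ∧ α2 n (φ (ρB n)) = ofAdd (1 + q * (n:ℤ)) := by
  obtain ⟨hε, ht, hρ⟩ := h
  refine ⟨?_, ?_, ?_, ?_⟩
  · rw [ht 1 (by omega), map_mul, map_zpow, map_zpow,
      α1_tB' hn (by omega) (by omega), α1_ΔB hn]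
    all_goals
      apply mult_eq_of_toAdd
      simp only [toAdd_mul, toAdd_zpow, toAdd_ofAdd, smul_eq_mul]
      all_goals first
      | ring
      | ring
  · rw [ht 1 (by omega), map_mul, map_zpow, map_zpow,
      α2_tB' hn (by omega) (by omega), α2_ΔB hn]
    all_goals
      apply mult_eq_of_toAdd
      simp only [toAdd_mul, toAdd_zpow, toAdd_ofAdd, smul_eq_mul]
      all_goals first
      | ring
      | ring
  · rw [hρ, map_mul, map_zpow, α1_ρB hn, α1_ΔB hn]
    all_goals
      apply mult_eq_of_toAdd
      simp only [toAdd_mul, toAdd_zpow, toAdd_ofAdd, smul_eq_mul]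
      all_goals first
      | ring
      | ring
  · rw [hρ, map_mul, map_zpow, α2_ρB hn, α2_ΔB hn]
    all_goals
      apply mult_eq_of_toAdd
      simp only [toAdd_mul, toAdd_zpow, toAdd_ofAdd, smul_eq_mul]
      all_goals first
      | ring
      | ring

theorem sig2b {n : ℕ} {ε p q : ℤ} {φ : ArtinB n →* ArtinB n} (hn : 5 ≤ n)
    (h : IsType2b n ε p q φ) :
    α1 n (φ (tB n 1)) = ofAdd (ε + p * ((n:ℤ) * ((n:ℤ)-1)))
  ∧ α2 n (φ (tB n 1)) = ofAdd (p * (n:ℤ))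
  ∧ α1 n (φ (ρB n)) = ofAdd (-((n:ℤ)-1) + q * ((n:ℤ) * ((n:ℤ)-1)))
  ∧ α2 n (φ (ρB n)) = ofAdd (-1 + q * (n:ℤ)) := by
  obtain ⟨hε, ht, hρ⟩ := h
  refine ⟨?_, ?_, ?_, ?_⟩
  · rw [ht 1 (by omega), map_mul, map_zpow, map_zpow,
      α1_tB' hn (by omega) (by omega), α1_ΔB hn]
    all_goals
      apply mult_eq_of_toAdd
      simp only [toAdd_mul, toAdd_zpow, toAdd_ofAdd, smul_eq_mul]
      all_goals first
      | ring
      | ring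
  · rw [ht 1 (by omega), map_mul, map_zpow, map_zpow,
      α2_tB' hn (by omega) (by omega), α2_ΔB hn]
    all_goals
      apply mult_eq_of_toAdd
      simp only [toAdd_mul, toAdd_zpow, toAdd_ofAdd, smul_eq_mul]
      all_goals first
      | ring
      | ring
  · rw [hρ, map_mul, map_zpow, map_inv, α1_ρB hn, α1_ΔB hn]
    all_goals
      apply mult_eq_of_toAdd
      simp only [toAdd_mul, toAdd_zpow, toAdd_inv, toAdd_ofAdd, smul_eq_mul]
      all_goals first
      | ring
      | ring
  · rw [hρ, map_mul, map_zpow, map_inv, α2_ρB hn, α2_ΔB hn]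
    all_goals
      apply mult_eq_of_toAdd
      simp only [toAdd_mul, toAdd_zpow, toAdd_inv, toAdd_ofAdd, smul_eq_mul]
      all_goals first
      | ring
      | ring

theorem sig3 {n : ℕ} {ε : ℤ} {k : ℕ} {p q r s : ℤ} {φ : ArtinB n →* ArtinB n} (hn : 5 ≤ n)
    (h : IsType3 n ε k p q r s φ) :
    α1 n (φ (tB n 1)) = ofAdd (ε + p * ((n:ℤ) * ((n:ℤ)-1)) + q * ((n:ℤ) * ((n:ℤ)-1)))
  ∧ α2 n (φ (tB n 1)) = ofAdd (q * (n:ℤ))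
  ∧ α1 n (φ (ρB n)) = ofAdd ((if k = 0 then 1 else -1) * ((n:ℤ)-1)
      + r * ((n:ℤ) * ((n:ℤ)-1)) + s * ((n:ℤ) * ((n:ℤ)-1)))
  ∧ α2 n (φ (ρB n)) = ofAdd (s * (n:ℤ)) := by
  obtain ⟨hε, hk, ht, ht0, hρ⟩ := h
  have hT := α1_ΔY hn
  refine ⟨?_, ?_, ?_, ?_⟩
  · rw [ht 1 (by omega) (by omega), map_mul, map_mul, map_zpow, map_zpow, map_zpow,
      α1_tB' hn (by omega) (by omega), α1_ΔB hn]
    all_goals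
      apply mult_eq_of_toAdd
      simp only [toAdd_mul, toAdd_zpow, toAdd_ofAdd, smul_eq_mul]
      all_goals first
      | linear_combination p * hT
      | ring
  · rw [ht 1 (by omega) (by omega), map_mul, map_mul, map_zpow, map_zpow, map_zpow,
      α2_tB' hn (by omega) (by omega), α2_ΔB hn, α2_ΔY hn]
    all_goals
      apply mult_eq_of_toAdd
      simp only [toAdd_mul, toAdd_zpow, toAdd_ofAdd, smul_eq_mul]
      all_goals first
      | ring
      | ring
  · rw [hρ, map_mul, map_mul, map_zpow, map_zpow, α1_ρkB hn, α1_ΔB hn]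
    all_goals
      apply mult_eq_of_toAdd
      simp only [toAdd_mul, toAdd_zpow, toAdd_ofAdd, smul_eq_mul]
      all_goals first
      | linear_combination r * hT
      | ring
  · rw [hρ, map_mul, map_mul, map_zpow, map_zpow, α2_ρkB hn, α2_ΔB hn, α2_ΔY hn]
    all_goals
      apply mult_eq_of_toAdd
      simp only [toAdd_mul, toAdd_zpow, toAdd_ofAdd, smul_eq_mul]
      all_goals first
      | ring
      | ring

theorem modn1_eq {n : ℕ} (hn : 5 ≤ n) {a b u v : ℤ} (ha : -2 ≤ a - b) (hb : a - b ≤ 2)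
    (h : a * ((n:ℤ)-1) + u * ((n:ℤ) * ((n:ℤ)-1))
       = b * ((n:ℤ)-1) + v * ((n:ℤ) * ((n:ℤ)-1))) : a = b ∧ u = v := by
  have h5 : (5:ℤ) ≤ (n:ℤ) := by exact_mod_cast hn
  have hne : ((n:ℤ)-1) ≠ 0 := by linarith
  have hcancel : (a + u * n) * ((n:ℤ)-1) = (b + v * n) * ((n:ℤ)-1) := by ring_nf; linarith
  exact modn_eq hn ha hb (mul_right_cancel₀ hne hcancel)

theorem zpow_cancel {G : Type*} [Group G] {ε : ℤ} (hε : ε = 1 ∨ ε = -1) {a b : G}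
    (h : a ^ ε = b ^ ε) : a = b := by
  rcases hε with rfl | rfl
  · simpa using h
  · simp only [zpow_neg, zpow_one] at h
    exact inv_injective h

theorem clash2a {n : ℕ} {ε p q : ℤ} {χ : ArtinB n →* ArtinB n} (hn : 5 ≤ n)
    (h : IsType2a n ε p q χ) (heq : χ (tB n 1) = χ (tB n 2)) : False := by
  obtain ⟨hε, ht, -⟩ := h
  rw [ht 1 (by omega), ht 2 (by omega)] at heq
  exact tB_one_ne_two hn (zpow_cancel hε (mul_right_cancel heq))

theorem clash2b {n : ℕ} {ε p q : ℤ} {χ : ArtinB n →* ArtinB n} (hn : 5 ≤ n)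
    (h : IsType2b n ε p q χ) (heq : χ (tB n 1) = χ (tB n 2)) : False := by
  obtain ⟨hε, ht, -⟩ := h
  rw [ht 1 (by omega), ht 2 (by omega)] at heq
  exact tB_last_ne hn (zpow_cancel hε (mul_right_cancel heq))

theorem clash3 {n : ℕ} {ε : ℤ} {k : ℕ} {p q r s : ℤ} {χ : ArtinB n →* ArtinB n} (hn : 5 ≤ n)
    (h : IsType3 n ε k p q r s χ) (heq : χ (tB n 1) = χ (tB n 2)) : False := by
  obtain ⟨hε, hk, ht, -, -⟩ := h
  rw [ht 1 (by omega) (by omega), ht 2 (by omega) (by omega)] at heq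
  exact tB_one_ne_two hn
    (zpow_cancel hε (mul_right_cancel (mul_right_cancel heq)))

theorem ofAdd_eq {a b : ℤ} (h : Multiplicative.ofAdd a = Multiplicative.ofAdd b) : a = b := h

/-- conjugate endomorphisms of `A[Bₙ]` of the explicit types have the same
type and the same parameters. -/
theorem conjugate_endomorphisms_same_type (n : ℕ) (hn : 5 ≤ n)
    (φ ψ : ArtinB n →* ArtinB n) (x : ArtinB n) (hconj : φ = conjComp x ψ)
    (hφ : IsType1 n φ ∨ (∃ ε p q : ℤ, IsType2a n ε p q φ) ∨
          (∃ ε p q : ℤ, IsType2b n ε p q φ) ∨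
          (∃ (ε : ℤ) (k : ℕ) (p q r s : ℤ), IsType3 n ε k p q r s φ))
    (hψ : IsType1 n ψ ∨ (∃ ε p q : ℤ, IsType2a n ε p q ψ) ∨
          (∃ ε p q : ℤ, IsType2b n ε p q ψ) ∨
          (∃ (ε : ℤ) (k : ℕ) (p q r s : ℤ), IsType3 n ε k p q r s ψ)) :
    (IsType1 n φ ∧ IsType1 n ψ) ∨
    (∃ ε p q : ℤ, IsType2a n ε p q φ ∧ IsType2a n ε p q ψ) ∨
    (∃ ε p q : ℤ, IsType2b n ε p q φ ∧ IsType2b n ε p q ψ) ∨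
    (∃ (ε : ℤ) (k : ℕ) (p q r s : ℤ),
      IsType3 n ε k p q r s φ ∧ IsType3 n ε k p q r s ψ) := by
  have happ : ∀ g : ArtinB n, φ g = x * ψ g * x⁻¹ := by
    intro g
    rw [hconj]
    show (MulAut.conj x).toMonoidHom.comp ψ g = x * ψ g * x⁻¹
    simp only [MonoidHom.comp_apply, MulEquiv.coe_toMonoidHom, MulAut.conj_apply]
  have habel : ∀ (H : ArtinB n →* Multiplicative ℤ) (g : ArtinB n), H (φ g) = H (ψ g) := by
    intro H g
    rw [happ g, map_mul, map_mul, map_inv, mul_comm (H x), mul_inv_cancel_right]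
  have hvals : ∀ a b : ArtinB n, φ a = φ b ↔ ψ a = ψ b := by
    intro a b
    rw [happ a, happ b]
    constructor
    · intro h
      exact mul_left_cancel (mul_right_cancel h)
    · intro h
      rw [h]
  have e1 := habel (α1 n) (tB n 1)
  have e2 := habel (α2 n) (tB n 1)
  have e4 := habel (α2 n) (ρB n)
  have e3 := habel (α1 n) (ρB n)
  rcases hφ with hφ1 | ⟨ε, p, q, hφ2⟩ | ⟨ε, p, q, hφ2⟩ | ⟨ε, k, p, q, r, s, hφ3⟩ <;>
    rcases hψ with hψ1 | ⟨ε', p', q', hψ2⟩ | ⟨ε', p', q', hψ2⟩ |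
      ⟨ε', k', p', q', r', s', hψ3⟩
  -- (1,1)
  · exact Or.inl ⟨hφ1, hψ1⟩
  -- (1,2a)
  · obtain ⟨g, h, -, htv, -⟩ := hφ1
    exact (clash2a hn hψ2 ((hvals _ _).mp
      (by rw [htv 1 (by omega), htv 2 (by omega)]))).elim
  -- (1,2b)
  · obtain ⟨g, h, -, htv, -⟩ := hφ1
    exact (clash2b hn hψ2 ((hvals _ _).mp
      (by rw [htv 1 (by omega), htv 2 (by omega)]))).elim
  -- (1,3)
  · obtain ⟨g, h, -, htv, -⟩ := hφ1
    exact (clash3 hn hψ3 ((hvals _ _).mp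
      (by rw [htv 1 (by omega), htv 2 (by omega)]))).elim
  -- (2a,1)
  · obtain ⟨g, h, -, htv, -⟩ := hψ1
    exact (clash2a hn hφ2 ((hvals _ _).mpr
      (by rw [htv 1 (by omega), htv 2 (by omega)]))).elim
  -- (2a,2a)
  · obtain ⟨S1, S2, S3, S4⟩ := sig2a hn hφ2
    obtain ⟨T1, T2, T3, T4⟩ := sig2a hn hψ2
    rw [S1, T1] at e1; rw [S2, T2] at e2; rw [S4, T4] at e4
    have E1 := ofAdd_eq e1
    have E2 := ofAdd_eq e2
    have E4 := ofAdd_eq e4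
    obtain rfl : p = p' := mul_right_cancel₀ (n_cast_ne hn) E2
    obtain rfl : q = q' := (modn_eq hn (by omega) (by omega) E4).2
    obtain rfl : ε = ε' := by linarith
    exact Or.inr (Or.inl ⟨ε, p, q, hφ2, hψ2⟩)
  -- (2a,2b)
  · obtain ⟨-, -, -, S4⟩ := sig2a hn hφ2
    obtain ⟨-, -, -, T4⟩ := sig2b hn hψ2
    rw [S4, T4] at e4
    have E4 := ofAdd_eq e4
    have := (modn_eq hn (by omega) (by omega) E4).1
    norm_num at this
  -- (2a,3)
  · obtain ⟨-, -, -, S4⟩ := sig2a hn hφ2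
    obtain ⟨-, -, -, T4⟩ := sig3 hn hψ3
    rw [S4, T4] at e4
    have E4 := ofAdd_eq e4
    have := (modn_eq hn (a := 1) (b := 0) (u := q) (v := s') (by omega) (by omega) (by linarith)).1
    norm_num at this
  -- (2b,1)
  · obtain ⟨g, h, -, htv, -⟩ := hψ1
    exact (clash2b hn hφ2 ((hvals _ _).mpr
      (by rw [htv 1 (by omega), htv 2 (by omega)]))).elim
  -- (2b,2a)
  · obtain ⟨-, -, -, S4⟩ := sig2b hn hφ2
    obtain ⟨-, -, -, T4⟩ := sig2a hn hψ2
    rw [S4, T4] at e4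
    have E4 := ofAdd_eq e4
    have := (modn_eq hn (by omega) (by omega) E4).1
    norm_num at this
  -- (2b,2b)
  · obtain ⟨S1, S2, S3, S4⟩ := sig2b hn hφ2
    obtain ⟨T1, T2, T3, T4⟩ := sig2b hn hψ2
    rw [S1, T1] at e1; rw [S2, T2] at e2; rw [S4, T4] at e4
    have E1 := ofAdd_eq e1
    have E2 := ofAdd_eq e2
    have E4 := ofAdd_eq e4
    obtain rfl : p = p' := mul_right_cancel₀ (n_cast_ne hn) E2
    obtain rfl : q = q' := (modn_eq hn (by omega) (by omega) E4).2
    obtain rfl : ε = ε' := by linarith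
    exact Or.inr (Or.inr (Or.inl ⟨ε, p, q, hφ2, hψ2⟩))
  -- (2b,3)
  · obtain ⟨-, -, -, S4⟩ := sig2b hn hφ2
    obtain ⟨-, -, -, T4⟩ := sig3 hn hψ3
    rw [S4, T4] at e4
    have E4 := ofAdd_eq e4
    have := (modn_eq hn (a := -1) (b := 0) (u := q) (v := s') (by omega) (by omega) (by linarith)).1
    norm_num at this
  -- (3,1)
  · obtain ⟨g, h, -, htv, -⟩ := hψ1
    exact (clash3 hn hφ3 ((hvals _ _).mpr
      (by rw [htv 1 (by omega), htv 2 (by omega)]))).elim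
  -- (3,2a)
  · obtain ⟨-, -, -, S4⟩ := sig3 hn hφ3
    obtain ⟨-, -, -, T4⟩ := sig2a hn hψ2
    rw [S4, T4] at e4
    have E4 := ofAdd_eq e4
    have := (modn_eq hn (a := 0) (b := 1) (u := s) (v := q') (by omega) (by omega) (by linarith)).1
    norm_num at this
  -- (3,2b)
  · obtain ⟨-, -, -, S4⟩ := sig3 hn hφ3
    obtain ⟨-, -, -, T4⟩ := sig2b hn hψ2
    rw [S4, T4] at e4
    have E4 := ofAdd_eq e4
    have := (modn_eq hn (a := 0) (b := -1) (u := s) (v := q') (by omega) (by omega) (by linarith)).1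
    norm_num at this
  -- (3,3)
  · obtain ⟨S1, S2, S3, S4⟩ := sig3 hn hφ3
    obtain ⟨T1, T2, T3, T4⟩ := sig3 hn hψ3
    rw [S1, T1] at e1; rw [S2, T2] at e2; rw [S3, T3] at e3; rw [S4, T4] at e4
    have E1 := ofAdd_eq e1
    have E2 := ofAdd_eq e2
    have E3 := ofAdd_eq e3
    have E4 := ofAdd_eq e4
    obtain rfl : q = q' := mul_right_cancel₀ (n_cast_ne hn) E2
    obtain rfl : s = s' := mul_right_cancel₀ (n_cast_ne hn) E4
    have hbε : -2 ≤ ε - ε' ∧ ε - ε' ≤ 2 := by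
      rcases hφ3.1 with rfl | rfl <;> rcases hψ3.1 with rfl | rfl <;> norm_num
    have hmod := modN_eq hn hbε.1 hbε.2
      (show ε + p * ((n:ℤ) * ((n:ℤ)-1)) = ε' + p' * ((n:ℤ) * ((n:ℤ)-1)) by linarith)
    obtain rfl : ε = ε' := hmod.1
    obtain rfl : p = p' := hmod.2
    have hbκ : -2 ≤ (if k = 0 then (1:ℤ) else -1) - (if k' = 0 then (1:ℤ) else -1) ∧
        (if k = 0 then (1:ℤ) else -1) - (if k' = 0 then (1:ℤ) else -1) ≤ 2 := by
      rcases hφ3.2.1 with rfl | rfl <;> rcases hψ3.2.1 with rfl | rfl <;> norm_num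
    have hmod2 := modn1_eq hn hbκ.1 hbκ.2
      (show (if k = 0 then (1:ℤ) else -1) * ((n:ℤ)-1) + r * ((n:ℤ) * ((n:ℤ)-1))
          = (if k' = 0 then (1:ℤ) else -1) * ((n:ℤ)-1) + r' * ((n:ℤ) * ((n:ℤ)-1)) by linarith)
    obtain rfl : r = r' := hmod2.2
    have hκ := hmod2.1
    obtain rfl : k = k' := by
      rcases hφ3.2.1 with rfl | rfl <;> rcases hψ3.2.1 with rfl | rfl
      · rfl
      · exfalso; norm_num at hκ
      · exfalso; norm_num at hκ
      · rfl
    exact Or.inr (Or.inr (Or.inr ⟨ε, k, p, q, r, s, hφ3, hψ3⟩))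
end

section
/- Let n ≥ 5 and let φ̄ and ψ̄ be endomorphisms of Ā = A[B_n]/Z(A[B_n]), each of one of the explicit forms (1), (2a), (2b). If φ̄ = conj_{x̄} ∘ ψ̄ for some x̄ ∈ Ā, then φ̄ and ψ̄ are of the same form, with the same parameter κ ∈ {0, …, n−1} in case (1) and the same parameter ε ∈ {1,−1} in cases (2a) and (2b). -/
/-- Form (1) of an endomorphism of `Ā`, with parameter `κ`. -/
def IsForm1 (n : ℕ) (κ : ℕ) (φ : AbarB n →* AbarB n) : Prop :=
  κ < n ∧ φ (ρbar n) = ρbar n ^ κ ∧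
    ∃ g : AbarB n, Commute g (ρbar n ^ κ) ∧ ∀ i < n, φ (tbar n i) = g

/-- Form (2a) of an endomorphism of `Ā`, with parameter `ε ∈ {1,-1}`. -/
def IsForm2a (n : ℕ) (ε : ℤ) (φ : AbarB n →* AbarB n) : Prop :=
  (ε = 1 ∨ ε = -1) ∧ (∀ i < n, φ (tbar n i) = tbar n i ^ ε) ∧ φ (ρbar n) = ρbar n

/-- Form (2b) of an endomorphism of `Ā`, with parameter `ε ∈ {1,-1}`. -/
def IsForm2b (n : ℕ) (ε : ℤ) (φ : AbarB n →* AbarB n) : Prop :=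
  (ε = 1 ∨ ε = -1) ∧ (∀ i < n, φ (tbar n i) = tbar n (n - i) ^ ε) ∧
    φ (ρbar n) = (ρbar n)⁻¹
/-!
Represent `A[Bₙ]` in the wreath product `(ℤ/n)ⁿ ⋊ Sₙ` by sending `r_i` (`i < n`) to
`(e_i + e_{i+1}) · (i i+1)` and `r_n` to `e_n`. An element commuting with the images of all
generators has trivial permutation part (the adjacent transpositions generate `Sₙ`, whose centre
is trivial for `n ≥ 3`) and constant translation part, whose coordinate sum is `0` in `ℤ/n`.
Hence both the permutation part and the coordinate sum kill the centre and descend to `Ā`.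
The coordinate sum is a conjugacy invariant equal to `2` on each `t̄_i` and to
`2(n-1) + 1 = -1` on `ρ̄_B`: it recovers `κ`, separates `ε = 1` from `ε = -1` as `n ∤ 4`, and
separates `ρ̄_B` from `ρ̄_B⁻¹`. The permutation part separates `t̄_1` from `t̄_2` (and `t̄_{n-1}`
from `t̄_{n-2}`), which an endomorphism of form (1) identifies and one of form (2a) or (2b) does
not; this property is invariant under composing with an inner automorphism.
-/

open Equiv SemidirectProduct

theorem isConj_conjComp_apply {G : Type*} [Group G] (x : G) (ψ : G →* G) (a : G) :
    IsConj (ψ a) (conjComp x ψ a) :=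
  isConj_iff.2 ⟨x, rfl⟩

theorem conjComp_apply_eq_iff {G : Type*} [Group G] (x : G) (ψ : G →* G) (a b : G) :
    conjComp x ψ a = conjComp x ψ b ↔ ψ a = ψ b :=
  (MulAut.conj x).injective.eq_iff

namespace Equiv.Perm

theorem eq_one_of_forall_commute_swap {α : Type*} [DecidableEq α] [Fintype α]
    (hα : 2 < Fintype.card α) {σ : Perm α} (h : ∀ a b : α, Commute σ (swap a b)) : σ = 1 := by
  have hmem : ∀ a b, b ≠ a → σ a = a ∨ σ a = b := by
    intro a b hba
    by_contra! hne
    have hab := congrArg (· a) (h a b).eq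
    simp only [Perm.mul_apply, swap_apply_left, swap_apply_of_ne_of_ne hne.1 hne.2] at hab
    exact hba (σ.injective hab)
  ext a
  by_contra ha
  rw [Perm.one_apply] at ha
  have key : ∀ b, b ≠ a → σ a = b := fun b hb ↦ (hmem a b hb).resolve_left ha
  obtain ⟨x, y, z, hxy, hxz, hyz⟩ := Fintype.two_lt_card_iff.1 hα
  by_cases hxa : x = a
  · subst hxa
    exact hyz ((key y hxy.symm).symm.trans (key z hxz.symm))
  by_cases hya : y = a
  · subst hya
    exact hxz ((key x hxa).symm.trans (key z hyz.symm))
  exact hxy ((key x hxa).symm.trans (key y hya))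

theorem induction_on_adjacent_swap {n : ℕ} {p : Perm (Fin n) → Prop} (one : p 1)
    (mul : ∀ σ τ, p σ → p τ → p (σ * τ))
    (adj : ∀ (i : ℕ) (hi : i + 1 < n), p (swap ⟨i, by omega⟩ ⟨i + 1, hi⟩)) (σ : Perm (Fin n)) :
    p σ := by
  cases n with
  | zero => rwa [Subsingleton.elim σ 1]
  | succ m =>
    have hσ : σ ∈ Submonoid.closure (Set.range fun i : Fin m ↦ swap i.castSucc i.succ) := by
      rw [mclosure_swap_castSucc_succ]; trivial
    induction hσ using Submonoid.closure_induction with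
    | mem _ h => obtain ⟨i, rfl⟩ := h; exact adj i (by omega)
    | one => exact one
    | mul _ _ _ _ hσ hτ => exact mul _ _ hσ hτ

theorem swap_braid {α : Type*} [DecidableEq α] {a b c : α} (hab : a ≠ b) (hac : a ≠ c)
    (hbc : b ≠ c) : swap a b * swap b c * swap a b = swap b c * swap a b * swap b c := by
  rw [swap_mul_swap_mul_swap hab hac, swap_comm a b, swap_comm b c,
    swap_mul_swap_mul_swap hbc.symm hac.symm, swap_comm]

end Equiv.Perm

theorem mulAutArrow_apply_apply_eq_inv_smul {G A M : Type*} [Group G] [MulAction G A] [Monoid M]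
    (g : G) (v : A → M) (a : A) : mulAutArrow g v a = v (g⁻¹ • a) :=
  rfl

abbrev Wreath (n : ℕ) := (Fin n → Multiplicative (ZMod n)) ⋊[mulAutArrow] Perm (Fin n)

namespace Wreath

variable {n : ℕ}

def unit (i : Fin n) : Fin n → Multiplicative (ZMod n) := Pi.mulSingle i (.ofAdd 1)

theorem mulAutArrow_unit (σ : Perm (Fin n)) (i : Fin n) :
    mulAutArrow σ (unit i) = unit (σ i) := by
  ext a
  rw [mulAutArrow_apply_apply_eq_inv_smul]
  simp [unit, Pi.mulSingle_apply, symm_apply_eq]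

def weight : Wreath n →* Multiplicative (ZMod n) :=
  lift (∏ i, Pi.evalMonoidHom _ i) 1 fun σ ↦ MonoidHom.ext fun v ↦ by
    simp only [MulEquiv.toMonoidHom_eq_coe, MonoidHom.coe_comp, MonoidHom.coe_coe,
      Function.comp_apply, MonoidHom.finsetProd_apply, Pi.evalMonoidHom_apply,
      MulAut.coe_one, MonoidHom.one_apply, map_one, id_eq]
    exact Equiv.prod_comp σ⁻¹ v

theorem weight_apply (w : Wreath n) : weight w = ∏ i, w.left i := by
  simp [weight, lift]

def transp (a b : Fin n) : Wreath n := ⟨unit a * unit b, swap a b⟩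

theorem weight_transp (a b : Fin n) : weight (transp a b) = .ofAdd 2 := by
  simp [weight_apply, transp, unit, Finset.prod_mul_distrib, ← ofAdd_add, one_add_one_eq_two]

theorem weight_inl_unit (a : Fin n) : weight (inl (unit a)) = .ofAdd 1 := by
  simp [weight_apply, unit]

theorem transp_braid {a b c : Fin n} (hab : a ≠ b) (hac : a ≠ c) (hbc : b ≠ c) :
    transp a b * transp b c * transp a b = transp b c * transp a b * transp b c := by
  ext : 1
  · simp [transp, mul_left, mulAutArrow_unit, swap_apply_of_ne_of_ne hac.symm hbc.symm,
      swap_apply_of_ne_of_ne hab hac, mul_comm, mul_left_comm, mul_assoc]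
  · exact Perm.swap_braid hab hac hbc

theorem transp_inl_braid {a b : Fin n} :
    transp a b * inl (unit b) * transp a b * inl (unit b) =
      inl (unit b) * transp a b * inl (unit b) * transp a b := by
  ext : 1
  · simp [transp, mul_left, mulAutArrow_unit, mul_comm, mul_left_comm, mul_assoc]
  · simp [transp]

theorem transp_commute {a b c d : Fin n} (hab : a ≠ b) (hcd : c ≠ d) (hca : c ≠ a) (hcb : c ≠ b)
    (hda : d ≠ a) (hdb : d ≠ b) : Commute (transp a b) (transp c d) := by
  ext : 1
  · simp [transp, mul_left, mulAutArrow_unit, swap_apply_of_ne_of_ne hca hcb,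
      swap_apply_of_ne_of_ne hda hdb, swap_apply_of_ne_of_ne hca.symm hda.symm,
      swap_apply_of_ne_of_ne hcb.symm hdb.symm, mul_comm, mul_left_comm, mul_assoc]
  · exact (Perm.disjoint_swap_swap (by simp [*, hca.symm, hcb.symm, hda.symm, hdb.symm])).commute.eq

theorem transp_commute_inl {a b c : Fin n} (hca : c ≠ a) (hcb : c ≠ b) :
    Commute (transp a b) (inl (unit c)) := by
  ext : 1
  · simp [transp, mul_left, mulAutArrow_unit, swap_apply_of_ne_of_ne hca hcb, mul_comm,
      mul_left_comm, mul_assoc]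
  · simp [transp]

def gen (n : ℕ) (i : Fin n) : Wreath n :=
  if h : (i : ℕ) + 1 < n then transp i ⟨i + 1, h⟩ else inl (unit i)

theorem gen_of_lt {i : ℕ} (h : i + 1 < n) :
    gen n ⟨i, by omega⟩ = transp ⟨i, by omega⟩ ⟨i + 1, h⟩ :=
  dif_pos h

theorem gen_of_add_one_eq {i : ℕ} (h : i + 1 = n) :
    gen n ⟨i, by omega⟩ = inl (unit ⟨i, by omega⟩) :=
  dif_neg (by simp [h])

theorem lift_gen_eq_one_of_mem_bnRels : ∀ r ∈ BnRels n, FreeGroup.lift (gen n) r = 1 := by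
  have ne {a b : ℕ} {ha : a < n} {hb : b < n} (h : a ≠ b) : (⟨a, ha⟩ : Fin n) ≠ ⟨b, hb⟩ :=
    Fin.ne_of_val_ne h
  rintro r (⟨⟨i, hi⟩, ⟨j, hj⟩, hij, hjn, rfl⟩ | ⟨⟨i, hi⟩, ⟨j, hj⟩, hin, hjn, rfl⟩ |
    ⟨⟨i, hi⟩, ⟨j, hj⟩, hij, rfl⟩) <;>
    simp only [map_mul, map_inv, FreeGroup.lift_apply_of, mul_inv_eq_one] <;> dsimp only at *
  · subst hij
    rw [gen_of_lt (i := i) (by omega), gen_of_lt hjn]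
    exact transp_braid (ne (by omega)) (ne (by omega)) (ne (by omega))
  · obtain rfl : j = i + 1 := by omega
    rw [gen_of_lt (i := i) (by omega), gen_of_add_one_eq hjn]
    exact transp_inl_braid
  · rw [gen_of_lt (i := i) (by omega)]
    rcases Nat.lt_or_ge (j + 1) n with hj' | hj'
    · rw [gen_of_lt hj']
      exact transp_commute (ne (by omega)) (ne (by omega)) (ne (by omega)) (ne (by omega))
        (ne (by omega)) (ne (by omega))
    · rw [gen_of_add_one_eq (i := j) (by omega)]
      exact transp_commute_inl (ne (by omega)) (ne (by omega))

theorem right_eq_one_of_forall_commute_gen (hn : 2 < n) {w : Wreath n}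
    (h : ∀ i, Commute w (gen n i)) : w.right = 1 := by
  refine Perm.eq_one_of_forall_commute_swap (by simpa) fun a b ↦ ?_
  refine Perm.induction_on_adjacent_swap (p := Commute w.right) (Commute.one_right _)
    (fun _ _ ↦ Commute.mul_right) (fun i hi ↦ ?_) _
  show w.right * _ = _ * w.right
  simpa [gen_of_lt hi, transp] using congrArg right (h ⟨i, by omega⟩).eq

theorem left_apply_eq_of_forall_commute_gen (hn : 2 < n) {w : Wreath n}
    (h : ∀ i, Commute w (gen n i)) (a b : Fin n) : w.left a = w.left b := by
  have hright := right_eq_one_of_forall_commute_gen hn h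
  have hfix : ∀ σ : Perm (Fin n), mulAutArrow σ w.left = w.left := by
    refine Perm.induction_on_adjacent_swap (by simp) (fun σ τ hσ hτ ↦ ?_) (fun i hi ↦ ?_)
    · rw [map_mul, MulAut.mul_apply, hτ, hσ]
    · have hcomm := congrArg left (h ⟨i, by omega⟩).eq
      simp only [gen_of_lt hi, transp, mul_left, hright, map_one, MulAut.one_apply] at hcomm
      rw [mul_comm] at hcomm
      exact (mul_left_cancel hcomm).symm
  have hb := congrFun (hfix (swap a b)) b
  rwa [mulAutArrow_apply_apply_eq_inv_smul, Perm.smul_def, swap_inv, swap_apply_right] at hb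

theorem weight_eq_one_of_forall_commute_gen (hn : 2 < n) {w : Wreath n}
    (h : ∀ i, Commute w (gen n i)) : weight w = 1 := by
  have hconst := left_apply_eq_of_forall_commute_gen hn h
  rw [weight_apply, Finset.prod_congr rfl fun i _ ↦ hconst i ⟨0, by omega⟩, Finset.prod_const,
    Finset.card_fin, ← ofAdd_toAdd (w.left _), ← ofAdd_nsmul, nsmul_eq_mul, ZMod.natCast_self,
    zero_mul, ofAdd_zero]

end Wreath

open Wreath

def toWreath (n : ℕ) : ArtinB n →* Wreath n := PresentedGroup.toGroup lift_gen_eq_one_of_mem_bnRels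

theorem toWreath_rB {n i : ℕ} (h1 : 1 ≤ i) (h2 : i ≤ n) :
    toWreath n (rB n i) = gen n ⟨i - 1, by omega⟩ := by
  rw [rB, dif_pos (by omega)]
  exact PresentedGroup.toGroup.of _

theorem commute_toWreath_gen_of_mem_center {n : ℕ} {z : ArtinB n}
    (hz : z ∈ Subgroup.center (ArtinB n)) (i : Fin n) : Commute (toWreath n z) (gen n i) := by
  rw [← PresentedGroup.toGroup.of lift_gen_eq_one_of_mem_bnRels]
  exact Commute.map (Subgroup.mem_center_iff.1 hz _).symm _

section Quotient

variable {n : ℕ}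

def weightBar (hn : 2 < n) : AbarB n →* Multiplicative (ZMod n) :=
  QuotientGroup.lift _ (weight.comp (toWreath n)) fun _ hz ↦
    MonoidHom.mem_ker.2 <|
      weight_eq_one_of_forall_commute_gen hn (commute_toWreath_gen_of_mem_center hz)

theorem weightBar_πB (hn : 2 < n) (g : ArtinB n) : weightBar hn (πB n g) = weight (toWreath n g) :=
  rfl

def permBar (hn : 2 < n) : AbarB n →* Perm (Fin n) :=
  QuotientGroup.lift _ (rightHom.comp (toWreath n)) fun _ hz ↦
    MonoidHom.mem_ker.2 <|
      right_eq_one_of_forall_commute_gen hn (commute_toWreath_gen_of_mem_center hz)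

theorem permBar_πB (hn : 2 < n) (g : ArtinB n) : permBar hn (πB n g) = (toWreath n g).right :=
  rfl

theorem tbar_eq_πB_rB {i : ℕ} (h1 : 1 ≤ i) (h2 : i < n) : tbar n i = πB n (rB n i) := by
  rw [tbar, tB, Nat.mod_eq_of_lt h2, if_neg (by omega)]

theorem weightBar_tbar (hn : 2 < n) {i : ℕ} (h1 : 1 ≤ i) (h2 : i < n) :
    weightBar hn (tbar n i) = .ofAdd 2 := by
  rw [tbar_eq_πB_rB h1 h2, weightBar_πB, toWreath_rB h1 h2.le, gen_of_lt (i := i - 1) (by omega),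
    weight_transp]

theorem permBar_tbar (hn : 2 < n) {i : ℕ} (h1 : 1 ≤ i) (h2 : i < n) :
    permBar hn (tbar n i) = swap ⟨i - 1, by omega⟩ ⟨i, h2⟩ := by
  rw [tbar_eq_πB_rB h1 h2, permBar_πB, toWreath_rB h1 h2.le, gen_of_lt (i := i - 1) (by omega)]
  simp [transp, Nat.sub_add_cancel h1]

theorem permBar_tbar_zpow (hn : 2 < n) {ε : ℤ} (hε : ε = 1 ∨ ε = -1) {i : ℕ} (h1 : 1 ≤ i)
    (h2 : i < n) : permBar hn (tbar n i ^ ε) = swap ⟨i - 1, by omega⟩ ⟨i, h2⟩ := by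
  rcases hε with rfl | rfl <;> simp [permBar_tbar hn h1 h2]

theorem weightBar_ρbar (hn : 2 < n) : weightBar hn (ρbar n) = .ofAdd (-1) := by
  obtain ⟨m, rfl⟩ : ∃ m, n = m + 1 := ⟨n - 1, by omega⟩
  rw [ρbar, weightBar_πB, ρB, map_list_prod, map_list_prod, List.map_map, List.map_map,
    List.prod_range_succ, List.map_congr_left (g := fun _ ↦ Multiplicative.ofAdd 2),
    List.map_const', List.prod_replicate, List.length_range, Function.comp_apply,
    Function.comp_apply, toWreath_rB (by omega) le_rfl,
    gen_of_add_one_eq (i := m + 1 - 1) (by omega), weight_inl_unit, ← ofAdd_nsmul, ← ofAdd_add]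
  · have hm : ((m + 1 : ℕ) : ZMod (m + 1)) = 0 := ZMod.natCast_self _
    push_cast at hm
    rw [nsmul_eq_mul]
    congr 1
    linear_combination 2 * hm
  · intro i hi
    rw [List.mem_range] at hi
    rw [Function.comp_apply, Function.comp_apply, toWreath_rB (by omega) (by omega),
      gen_of_lt (i := i + 1 - 1) (by omega), weight_transp]

theorem weightBar_eq_of_isConj (hn : 2 < n) {a b : AbarB n} (h : IsConj a b) :
    weightBar hn a = weightBar hn b :=
  isConj_iff_eq.1 (MonoidHom.map_isConj _ h)

theorem eq_of_isConj_ρbar_pow (hn : 2 < n) {κ κ' : ℕ} (hκ : κ < n) (hκ' : κ' < n)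
    (h : IsConj (ρbar n ^ κ) (ρbar n ^ κ')) : κ = κ' := by
  have hw := weightBar_eq_of_isConj hn h
  rw [map_pow, map_pow, weightBar_ρbar, ← ofAdd_nsmul, ← ofAdd_nsmul,
    EmbeddingLike.apply_eq_iff_eq, smul_neg, smul_neg, neg_inj, nsmul_one, nsmul_one] at hw
  simpa [ZMod.val_natCast, Nat.mod_eq_of_lt, hκ, hκ'] using congrArg ZMod.val hw

theorem eq_of_isConj_tbar_zpow (hn : 2 < n) (hn4 : n ≠ 4) {i : ℕ} (h1 : 1 ≤ i) (h2 : i < n)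
    {ε ε' : ℤ} (hε : ε = 1 ∨ ε = -1) (hε' : ε' = 1 ∨ ε' = -1)
    (h : IsConj (tbar n i ^ ε) (tbar n i ^ ε')) : ε = ε' := by
  have hw := weightBar_eq_of_isConj hn h
  rw [map_zpow, map_zpow, weightBar_tbar hn h1 h2, ← ofAdd_zsmul, ← ofAdd_zsmul,
    EmbeddingLike.apply_eq_iff_eq] at hw
  have h4 : ¬ ((4 : ℕ) : ZMod n) = 0 := by
    rw [ZMod.natCast_eq_zero_iff]
    intro hdvd
    have := Nat.le_of_dvd (by norm_num) hdvd
    interval_cases n <;> simp_all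
  rcases hε with rfl | rfl <;> rcases hε' with rfl | rfl <;> first | rfl | exfalso
  all_goals
    simp only [one_smul, neg_smul] at hw
    exact h4 (by push_cast; first | linear_combination hw | linear_combination -hw)

theorem not_isConj_ρbar_inv (hn : 2 < n) : ¬ IsConj (ρbar n) (ρbar n)⁻¹ := by
  intro h
  have hw := weightBar_eq_of_isConj hn h
  rw [map_inv, weightBar_ρbar, ← ofAdd_neg, EmbeddingLike.apply_eq_iff_eq, neg_neg] at hw
  have h2 : ((2 : ℕ) : ZMod n) = 0 := by push_cast; linear_combination -hw
  exact absurd (Nat.le_of_dvd (by norm_num) ((ZMod.natCast_eq_zero_iff _ _).1 h2)) (by omega)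

theorem tbar_zpow_ne (hn : 2 < n) {ε : ℤ} (hε : ε = 1 ∨ ε = -1) {i j : ℕ} (hi : 1 ≤ i)
    (hin : i < n) (hj : 1 ≤ j) (hjn : j < n) (hij : i ≠ j) : tbar n i ^ ε ≠ tbar n j ^ ε := by
  intro h
  have hp := congrArg (· ⟨i, hin⟩) (congrArg (permBar hn) h)
  simp only [permBar_tbar_zpow hn hε hi hin, permBar_tbar_zpow hn hε hj hjn, swap_apply_right,
    swap_apply_def, Fin.mk.injEq] at hp
  split_ifs at hp <;> simp only [Fin.mk.injEq] at hp <;> omega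

theorem IsForm1.map_tbar_one_eq_map_tbar_two (hn : 2 < n) {κ : ℕ} {φ : AbarB n →* AbarB n}
    (h : IsForm1 n κ φ) : φ (tbar n 1) = φ (tbar n 2) := by
  obtain ⟨-, -, g, -, hg⟩ := h
  rw [hg 1 (by omega), hg 2 (by omega)]

theorem IsForm2a.map_tbar_one_ne_map_tbar_two (hn : 2 < n) {ε : ℤ} {φ : AbarB n →* AbarB n}
    (h : IsForm2a n ε φ) : φ (tbar n 1) ≠ φ (tbar n 2) := by
  rw [h.2.1 1 (by omega), h.2.1 2 (by omega)]
  exact tbar_zpow_ne hn h.1 le_rfl (by omega) (by omega) hn (by omega)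

theorem IsForm2b.map_tbar_one_ne_map_tbar_two (hn : 2 < n) {ε : ℤ} {φ : AbarB n →* AbarB n}
    (h : IsForm2b n ε φ) : φ (tbar n 1) ≠ φ (tbar n 2) := by
  rw [h.2.1 1 (by omega), h.2.1 2 (by omega)]
  exact tbar_zpow_ne hn h.1 (by omega) (by omega) (by omega) (by omega) (by omega)

theorem IsForm1.eq_of_isConj (hn : 2 < n) {κ κ' : ℕ} {φ ψ : AbarB n →* AbarB n}
    (hφ : IsForm1 n κ φ) (hψ : IsForm1 n κ' ψ) (h : IsConj (φ (ρbar n)) (ψ (ρbar n))) :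
    κ = κ' := by
  rw [hφ.2.1, hψ.2.1] at h
  exact eq_of_isConj_ρbar_pow hn hφ.1 hψ.1 h

theorem IsForm2a.eq_of_isConj (hn : 2 < n) (hn4 : n ≠ 4) {ε ε' : ℤ} {φ ψ : AbarB n →* AbarB n}
    (hφ : IsForm2a n ε φ) (hψ : IsForm2a n ε' ψ) (h : IsConj (φ (tbar n 1)) (ψ (tbar n 1))) :
    ε = ε' := by
  rw [hφ.2.1 1 (by omega), hψ.2.1 1 (by omega)] at h
  exact eq_of_isConj_tbar_zpow hn hn4 le_rfl (by omega) hφ.1 hψ.1 h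

theorem IsForm2b.eq_of_isConj (hn : 2 < n) (hn4 : n ≠ 4) {ε ε' : ℤ} {φ ψ : AbarB n →* AbarB n}
    (hφ : IsForm2b n ε φ) (hψ : IsForm2b n ε' ψ) (h : IsConj (φ (tbar n 1)) (ψ (tbar n 1))) :
    ε = ε' := by
  rw [hφ.2.1 1 (by omega), hψ.2.1 1 (by omega)] at h
  exact eq_of_isConj_tbar_zpow hn hn4 (by omega) (by omega) hφ.1 hψ.1 h

theorem IsForm2a.not_isConj_form2b (hn : 2 < n) {ε ε' : ℤ} {φ ψ : AbarB n →* AbarB n}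
    (hφ : IsForm2a n ε φ) (hψ : IsForm2b n ε' ψ) : ¬ IsConj (φ (ρbar n)) (ψ (ρbar n)) := by
  rw [hφ.2.2, hψ.2.2]
  exact not_isConj_ρbar_inv hn

end Quotient

/-- conjugate endomorphisms of `Ā` of the explicit forms have the same
form and the same parameter. -/
theorem quotient_conjugate_endomorphisms_same_form (n : ℕ) (hn : 5 ≤ n)
    (φ ψ : AbarB n →* AbarB n) (x : AbarB n) (hconj : φ = conjComp x ψ)
    (hφ : (∃ κ : ℕ, IsForm1 n κ φ) ∨ (∃ ε : ℤ, IsForm2a n ε φ) ∨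
          (∃ ε : ℤ, IsForm2b n ε φ))
    (hψ : (∃ κ : ℕ, IsForm1 n κ ψ) ∨ (∃ ε : ℤ, IsForm2a n ε ψ) ∨
          (∃ ε : ℤ, IsForm2b n ε ψ)) :
    (∃ κ : ℕ, IsForm1 n κ φ ∧ IsForm1 n κ ψ) ∨
    (∃ ε : ℤ, IsForm2a n ε φ ∧ IsForm2a n ε ψ) ∨
    (∃ ε : ℤ, IsForm2b n ε φ ∧ IsForm2b n ε ψ) := by
  subst hconj
  have h2 : 2 < n := by omega
  have h4 : n ≠ 4 := by omega
  have hc a : IsConj (conjComp x ψ a) (ψ a) := (isConj_conjComp_apply x ψ a).symm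
  have hsame := conjComp_apply_eq_iff x ψ (tbar n 1) (tbar n 2)
  rcases hφ with ⟨κ, hφ⟩ | ⟨ε, hφ⟩ | ⟨ε, hφ⟩ <;> rcases hψ with ⟨κ', hψ⟩ | ⟨ε', hψ⟩ | ⟨ε', hψ⟩
  · exact Or.inl ⟨κ, hφ, hφ.eq_of_isConj h2 hψ (hc _) ▸ hψ⟩
  · exact (hψ.map_tbar_one_ne_map_tbar_two h2 (hsame.1 (hφ.map_tbar_one_eq_map_tbar_two h2))).elim
  · exact (hψ.map_tbar_one_ne_map_tbar_two h2 (hsame.1 (hφ.map_tbar_one_eq_map_tbar_two h2))).elim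
  · exact (hφ.map_tbar_one_ne_map_tbar_two h2 (hsame.2 (hψ.map_tbar_one_eq_map_tbar_two h2))).elim
  · exact Or.inr (Or.inl ⟨ε, hφ, hφ.eq_of_isConj h2 h4 hψ (hc _) ▸ hψ⟩)
  · exact (hφ.not_isConj_form2b h2 hψ (hc _)).elim
  · exact (hφ.map_tbar_one_ne_map_tbar_two h2 (hsame.2 (hψ.map_tbar_one_eq_map_tbar_two h2))).elim
  · exact (hψ.not_isConj_form2b h2 hφ (hc _).symm).elim
  · exact Or.inr (Or.inr ⟨ε, hφ, hφ.eq_of_isConj h2 h4 hψ (hc _) ▸ hψ⟩)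
end

section
/- Let n ≥ 2. Then in A[B_n] one has Δ_Y^{−1} ρ_B Δ_Y = r_n r_{n−1} ⋯ r_2 r_1. -/
/- ### Auxiliary machinery for Statement 14 -/

private lemma relOne {α : Type*} {rels : Set (FreeGroup α)} {r : FreeGroup α} (h : r ∈ rels) :
    PresentedGroup.mk rels r = 1 := by
  have := Subgroup.subset_normalClosure (s := rels) h
  exact (QuotientGroup.eq_one_iff r).mpr this

/-- The far-commutation relation `r_i r_j = r_j r_i` for `1 ≤ i`, `i + 2 ≤ j ≤ n`. -/
private lemma rB_comm (n i j : ℕ) (h1 : 1 ≤ i) (h2 : i + 2 ≤ j) (h3 : j ≤ n) :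
    rB n i * rB n j = rB n j * rB n i := by
  have hi : i - 1 < n := by omega
  have hj : j - 1 < n := by omega
  have hmem : (FreeGroup.of (⟨i - 1, hi⟩ : Fin n) * FreeGroup.of (⟨j - 1, hj⟩ : Fin n) *
      (FreeGroup.of (⟨j - 1, hj⟩ : Fin n) * FreeGroup.of (⟨i - 1, hi⟩ : Fin n))⁻¹) ∈
      BnRels n := by
    right; right
    exact ⟨⟨i - 1, hi⟩, ⟨j - 1, hj⟩, by simp; omega, rfl⟩
  have h := relOne hmem
  rw [map_mul, map_inv, map_mul, map_mul, mul_inv_eq_one] at h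
  rw [rB, rB, dif_pos hi, dif_pos hj]
  exact h

/-- `P m = r_1 r_2 ⋯ r_m`. -/
private def PnB (n m : ℕ) : ArtinB n := ((List.range m).map fun i => rB n (i + 1)).prod

/-- `C m = r_m r_{m-1} ⋯ r_1`. -/
private def CnB (n m : ℕ) : ArtinB n := ((List.range m).map fun i => rB n (m - i)).prod

/-- `D m = (r_1⋯r_m)(r_1⋯r_{m-1})⋯(r_1 r_2) r_1`. -/
private def DnB (n m : ℕ) : ArtinB n := ((List.range m).map fun k => PnB n (m - k)).prod

private lemma PnB_succ (n m : ℕ) : PnB n (m + 1) = PnB n m * rB n (m + 1) := by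
  simp [PnB, List.range_succ]

private lemma CnB_succ (n m : ℕ) : CnB n (m + 1) = rB n (m + 1) * CnB n m := by
  rw [CnB, List.range_succ_eq_map]
  simp only [List.map_cons, List.map_map, List.prod_cons, Nat.sub_zero]
  rw [CnB]
  congr 1
  · congr 1
    ext i
    simp [Nat.succ_sub_succ]

private lemma DnB_succ (n m : ℕ) : DnB n (m + 1) = PnB n (m + 1) * DnB n m := by
  rw [DnB, List.range_succ_eq_map]
  simp only [List.map_cons, List.map_map, List.prod_cons, Nat.sub_zero]
  rw [DnB]
  congr 1
  · congr 1
    ext i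
    simp [Nat.succ_sub_succ]

/-- `P m` commutes with `r_j` whenever `m + 2 ≤ j ≤ n`. -/
private lemma PnB_comm_rB (n : ℕ) : ∀ (m j : ℕ), m + 2 ≤ j → j ≤ n →
    PnB n m * rB n j = rB n j * PnB n m := by
  intro m
  induction m with
  | zero => intro j _ _; simp [PnB]
  | succ m ih =>
      intro j hm hj
      rw [PnB_succ, mul_assoc, rB_comm n (m + 1) j (by omega) (by omega) hj,
        ← mul_assoc, ih j (by omega) hj, mul_assoc]

/-- `D m` commutes with `r_j` whenever `m + 2 ≤ j ≤ n`. -/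
private lemma DnB_comm_rB (n : ℕ) : ∀ (m j : ℕ), m + 2 ≤ j → j ≤ n →
    DnB n m * rB n j = rB n j * DnB n m := by
  intro m
  induction m with
  | zero => intro j _ _; simp [DnB]
  | succ m ih =>
      intro j hm hj
      rw [DnB_succ, mul_assoc, ih j (by omega) hj, ← mul_assoc,
        PnB_comm_rB n (m + 1) j (by omega) hj, mul_assoc]

/-- The key identity `D (m+1) = D m * C (m+1)`, valid whenever `m + 1 ≤ n`.
It only uses the far-commutation relations. -/
private lemma DnB_eq_CnB (n : ℕ) : ∀ m : ℕ, m + 1 ≤ n →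
    DnB n (m + 1) = DnB n m * CnB n (m + 1) := by
  intro m
  induction m with
  | zero =>
      intro _
      simp [DnB_succ, PnB_succ, CnB_succ, DnB, CnB, PnB, List.range_succ]
  | succ m ih =>
      intro hm
      have hc := DnB_comm_rB n m (m + 2) (by omega) hm
      calc DnB n (m + 2) = PnB n (m + 1) * rB n (m + 2) * DnB n (m + 1) := by
              rw [DnB_succ, PnB_succ]
        _ = PnB n (m + 1) * rB n (m + 2) * (DnB n m * CnB n (m + 1)) := by
              rw [ih (by omega)]
        _ = PnB n (m + 1) * (rB n (m + 2) * DnB n m) * CnB n (m + 1) := by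
              simp only [mul_assoc]
        _ = PnB n (m + 1) * (DnB n m * rB n (m + 2)) * CnB n (m + 1) := by
              rw [hc]
        _ = PnB n (m + 1) * DnB n m * (rB n (m + 2) * CnB n (m + 1)) := by
              simp only [mul_assoc]
        _ = DnB n (m + 1) * CnB n (m + 2) := by rw [← DnB_succ, ← CnB_succ]

/-- `Δ_Y⁻¹ ρ_B Δ_Y = r_n r_{n-1} ⋯ r_2 r_1` in `A[Bₙ]` for `n ≥ 2`. -/
theorem deltaY_conj_rho (n : ℕ) (hn : 2 ≤ n) :
    (ΔY n)⁻¹ * ρB n * ΔY n = ((List.range n).map fun i => rB n (n - i)).prod := by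
  have hρ : ρB n = PnB n n := rfl
  have hΔ : ΔY n = DnB n (n - 1) := rfl
  have hC : ((List.range n).map fun i => rB n (n - i)).prod = CnB n n := rfl
  have key : PnB n n * DnB n (n - 1) = DnB n (n - 1) * CnB n n := by
    obtain ⟨m, rfl⟩ : ∃ m, n = m + 1 := ⟨n - 1, by omega⟩
    simp only [Nat.add_sub_cancel]
    rw [← DnB_succ, DnB_eq_CnB (m + 1) m (le_refl _)]
  rw [hρ, hΔ, hC, mul_assoc, key, ← mul_assoc, inv_mul_cancel, one_mul]
end

section
/- Let G be a group with center Z, let φ₀ be an automorphism of G, let λ : G → Z be a group homomorphism, and define φ : G → G by φ(x) = φ₀(x)·λ(x) for all x ∈ G. Then φ is a group endomorphism of G, φ(Z) ⊆ Z, and: (1) φ is injective if and only if the restriction φ|_Z : Z → Z is injective; (2) φ is surjective if and only if φ(Z) = Z. -/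
private lemma transvection_centmap {G : Type*} [Group G] (e : G ≃* G) {z : G}
    (hz : z ∈ Subgroup.center G) : e z ∈ Subgroup.center G := by
  rw [Subgroup.mem_center_iff]
  intro g
  have h1 : g = e (e.symm g) := (e.apply_symm_apply g).symm
  rw [h1, ← map_mul, ← map_mul]
  congr 1
  exact Subgroup.mem_center_iff.mp hz _

/-- a transvection `φ(x) = φ₀(x)·λ(x)` of an automorphism `φ₀` by a
homomorphism `λ` into the center is an endomorphism, maps the center into itself,
is injective iff its restriction to the center is injective, and is surjective iff
its image of the center is the whole center. -/
theorem transvection_injective_surjective {G : Type*} [Group G]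
    (φ₀ : G ≃* G) (lam : G →* G) (hlam : ∀ x : G, lam x ∈ Subgroup.center G)
    (φ : G → G) (hφ : ∀ x : G, φ x = φ₀ x * lam x) :
    (∀ x y : G, φ (x * y) = φ x * φ y) ∧
    (∀ z ∈ Subgroup.center G, φ z ∈ Subgroup.center G) ∧
    (Function.Injective φ ↔ Set.InjOn φ (Subgroup.center G)) ∧
    (Function.Surjective φ ↔
      φ '' (Subgroup.center G) = (Subgroup.center G : Set G)) := by
  have hcomm : ∀ (c : G), c ∈ Subgroup.center G → ∀ g : G, g * c = c * g :=
    fun c hc g => Subgroup.mem_center_iff.mp hc g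
  have hhom : ∀ x y : G, φ (x * y) = φ x * φ y := by
    intro x y
    rw [hφ, hφ, hφ, map_mul, map_mul]
    calc φ₀ x * φ₀ y * (lam x * lam y)
        = φ₀ x * (φ₀ y * lam x) * lam y := by group
      _ = φ₀ x * (lam x * φ₀ y) * lam y := by rw [hcomm _ (hlam x) (φ₀ y)]
      _ = φ₀ x * lam x * (φ₀ y * lam y) := by group
  have hcent : ∀ z ∈ Subgroup.center G, φ z ∈ Subgroup.center G := by
    intro z hz
    rw [hφ]
    exact mul_mem (transvection_centmap φ₀ hz) (hlam z)
  have hφone : φ 1 = 1 := by rw [hφ]; simp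
  refine ⟨hhom, hcent, ?_, ?_⟩
  · constructor
    · exact fun h => h.injOn
    · intro hinj x y hxy
      have h0 : φ₀ (y⁻¹ * x) = lam y * (lam x)⁻¹ := by
        rw [hφ, hφ] at hxy
        have hx : φ₀ x = φ₀ y * lam y * (lam x)⁻¹ := by rw [← hxy]; group
        rw [map_mul, map_inv, hx]; group
      have hc : φ₀ (y⁻¹ * x) ∈ Subgroup.center G := by
        rw [h0]; exact mul_mem (hlam y) (inv_mem (hlam x))
      have hz : y⁻¹ * x ∈ Subgroup.center G := by
        have := transvection_centmap φ₀.symm hc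
        simpa using this
      have h1 : φ (y⁻¹ * x) = φ 1 := by
        have h2 : φ y * φ (y⁻¹ * x) = φ y := by
          rw [← hhom, mul_inv_cancel_left]; exact hxy
        rw [hφone]
        exact mul_left_cancel (by rw [h2, mul_one])
      have := hinj hz (one_mem (Subgroup.center G)) h1
      rw [inv_mul_eq_one] at this
      exact this.symm
  · constructor
    · intro hsurj
      apply Set.Subset.antisymm
      · rintro _ ⟨z, hz, rfl⟩
        exact hcent z hz
      · intro z hz
        obtain ⟨x, hx⟩ := hsurj z
        refine ⟨x, ?_, hx⟩
        have hfx : φ₀ x = z * (lam x)⁻¹ := by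
          rw [hφ] at hx
          rw [← hx]; group
        have hc : φ₀ x ∈ Subgroup.center G := by
          rw [hfx]; exact mul_mem hz (inv_mem (hlam x))
        have := transvection_centmap φ₀.symm hc
        simpa using this
    · intro heq y
      set x := φ₀.symm y with hx
      have hli : (lam x)⁻¹ ∈ (Subgroup.center G : Set G) :=
        inv_mem (hlam x)
      rw [← heq] at hli
      obtain ⟨z, hz, hφz⟩ := hli
      refine ⟨x * z, ?_⟩
      rw [hhom, hφ x, hφz, hx, MulEquiv.apply_symm_apply]
      group
end

section
/- Let n ≥ 3, and in A[B_n] set δ = r_{n−1} r_{n−2} ⋯ r_2 r_1^2 r_2 ⋯ r_{n−2} r_{n−1} and δ' = r_{n−1}^{−1} δ r_{n−1}^{−1} = r_{n−2} ⋯ r_2 r_1^2 r_2 ⋯ r_{n−2}. Then δ δ' = δ' δ, and equivalently the Artin relation of length four δ' r_{n−1} δ' r_{n−1} = r_{n−1} δ' r_{n−1} δ' holds in A[B_n]. -/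
lemma rB_eq_of (n i : ℕ) (h : i - 1 < n) : rB n i = PresentedGroup.of ⟨i - 1, h⟩ := dif_pos h

lemma rB_braid (n p : ℕ) (hp : 1 ≤ p) (h : p + 1 < n) :
    rB n p * rB n (p + 1) * rB n p = rB n (p + 1) * rB n p * rB n (p + 1) := by
  rw [rB_eq_of n p (by omega), rB_eq_of n (p + 1) (by omega)]
  exact PresentedGroup.mk_eq_mk_of_mul_inv_mem (Or.inl ⟨_, _, by simp; omega, by simp; omega, rfl⟩)

lemma rB_commute (n p q : ℕ) (hp : 1 ≤ p) (hpq : p + 2 ≤ q) (hq : q ≤ n) :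
    Commute (rB n p) (rB n q) := by
  rw [rB_eq_of n p (by omega), rB_eq_of n q (by omega)]
  exact PresentedGroup.mk_eq_mk_of_mul_inv_mem (Or.inr (Or.inr ⟨_, _, by simp; omega, rfl⟩))

theorem artin_four_conj_of_braid {G : Type*} [Group G] {a b c : G}
    (hab : a * b * a = b * a * b) (hbc : Commute b c) (hca : c * a * c * a = a * c * a * c) :
    a * c * a * b * (a * c * a) * b = b * (a * c * a) * b * (a * c * a) := by
  have hbc : b * c = c * b := hbc
  calc a * c * a * b * (a * c * a) * b
      = a * c * (a * b * a) * c * a * b := by simp only [mul_assoc]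
    _ = a * (c * b) * a * (b * c) * a * b := by rw [hab]; simp only [mul_assoc]
    _ = a * (b * c) * a * (c * b) * a * b := by rw [hbc]
    _ = a * b * (c * a * c) * (b * a * b) := by simp only [mul_assoc]
    _ = a * b * (c * a * c * a) * b * a := by rw [← hab]; simp only [mul_assoc]
    _ = (a * b * a) * (c * a * c) * b * a := by rw [hca]; simp only [mul_assoc]
    _ = b * a * (b * c) * a * (c * b) * a := by rw [hab]; simp only [mul_assoc]
    _ = b * a * (c * b) * a * (b * c) * a := by rw [hbc]
    _ = b * a * c * (b * a * b) * c * a := by simp only [mul_assoc]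
    _ = b * (a * c * a) * b * (a * c * a) := by rw [← hab]; simp only [mul_assoc]

def δPar (n : ℕ) : ℕ → ArtinB n
  | 0 => 1
  | k + 1 => rB n (k + 1) * δPar n k * rB n (k + 1)

lemma δPar_succ_eq_prod (n k : ℕ) :
    δPar n (k + 1) = ((List.range k).map fun i => rB n (k + 1 - i)).prod * rB n 1 ^ 2 *
      ((List.range k).map fun i => rB n (i + 2)).prod := by
  induction k with
  | zero => simp [δPar, pow_two]
  | succ k ih =>
    rw [δPar, ih, List.prod_range_succ' (fun i => rB n (k + 1 + 1 - i)),
      List.prod_range_succ (fun i => rB n (i + 2))]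
    simp only [Nat.sub_zero, Nat.succ_sub_succ, mul_assoc]

lemma δB_eq_δPar (n : ℕ) (hn : 2 ≤ n) : δB n = δPar n (n - 1) := by
  obtain ⟨m, rfl⟩ : ∃ m, n = m + 2 := ⟨n - 2, by omega⟩
  show _ = δPar (m + 2) (m + 1)
  rw [δB, δPar_succ_eq_prod]
  rfl

lemma rB_commute_δPar (n q : ℕ) (hq : q ≤ n) :
    ∀ k, k + 2 ≤ q → Commute (rB n q) (δPar n k)
  | 0, _ => Commute.one_right _
  | k + 1, hk =>
    have hc := (rB_commute n (k + 1) q (by omega) hk hq).symm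
    (hc.mul_right (rB_commute_δPar n q hq k (by omega))).mul_right hc

lemma δPar_artin_four (n : ℕ) :
    ∀ k, k + 2 ≤ n → δPar n k * rB n (k + 1) * δPar n k * rB n (k + 1) =
      rB n (k + 1) * δPar n k * rB n (k + 1) * δPar n k
  | 0, _ => by simp [δPar]
  | k + 1, hk =>
    artin_four_conj_of_braid (rB_braid n (k + 1) (by omega) (by omega))
      (rB_commute_δPar n (k + 2) (by omega) k le_rfl) (δPar_artin_four n k (by omega))

/-- with `δ' = r_{n-1}⁻¹ δ r_{n-1}⁻¹ = r_{n-2} ⋯ r_2 r_1² r_2 ⋯ r_{n-2}`,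
one has `δ δ' = δ' δ`, equivalently the Artin relation of length four between
`δ'` and `r_{n-1}` holds in `A[Bₙ]`, `n ≥ 3`. -/
theorem delta_delta_prime_commute (n : ℕ) (hn : 3 ≤ n) :
    (rB n (n - 1))⁻¹ * δB n * (rB n (n - 1))⁻¹ =
      ((List.range (n - 3)).map fun i => rB n (n - 2 - i)).prod * rB n 1 ^ 2 *
        ((List.range (n - 3)).map fun i => rB n (i + 2)).prod ∧
    δB n * ((rB n (n - 1))⁻¹ * δB n * (rB n (n - 1))⁻¹) =
      ((rB n (n - 1))⁻¹ * δB n * (rB n (n - 1))⁻¹) * δB n ∧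
    ((rB n (n - 1))⁻¹ * δB n * (rB n (n - 1))⁻¹) * rB n (n - 1) *
        ((rB n (n - 1))⁻¹ * δB n * (rB n (n - 1))⁻¹) * rB n (n - 1) =
      rB n (n - 1) * ((rB n (n - 1))⁻¹ * δB n * (rB n (n - 1))⁻¹) *
        rB n (n - 1) * ((rB n (n - 1))⁻¹ * δB n * (rB n (n - 1))⁻¹) := by
  obtain ⟨m, rfl⟩ : ∃ m, n = m + 3 := ⟨n - 3, by omega⟩
  simp only [Nat.reduceSubDiff, Nat.add_sub_cancel]
  have hδ : δB (m + 3) = rB (m + 3) (m + 2) * δPar (m + 3) (m + 1) * rB (m + 3) (m + 2) :=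
    δB_eq_δPar (m + 3) (by omega)
  have hδ' : (rB (m + 3) (m + 2))⁻¹ * δB (m + 3) * (rB (m + 3) (m + 2))⁻¹ =
      δPar (m + 3) (m + 1) := by
    rw [hδ]; group
  have hfour := δPar_artin_four (m + 3) (m + 1) (by omega)
  refine ⟨?_, ?_, ?_⟩
  · rw [hδ', δPar_succ_eq_prod]
  · rw [hδ', hδ]
    simpa only [mul_assoc] using hfour.symm
  · rw [hδ']
    exact hfour
end

section
/- Let n ≥ 3, and in A[B_n] set δ = r_{n−1} r_{n−2} ⋯ r_2 r_1^2 r_2 ⋯ r_{n−2} r_{n−1}. Then the elements δ r_n and r_{n−1}^{−1} satisfy the Artin relation of length four: (δ r_n) r_{n−1}^{−1} (δ r_n) r_{n−1}^{−1} = r_{n−1}^{−1} (δ r_n) r_{n−1}^{−1} (δ r_n). -/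
namespace DeltaRnAux

variable {n : ℕ}

lemma mk_rel {w : FreeGroup (Fin n)} (h : w ∈ BnRels n) :
    PresentedGroup.mk (BnRels n) w = 1 := by
  have : w ∈ Subgroup.normalClosure (BnRels n) := Subgroup.subset_normalClosure h
  exact (QuotientGroup.eq_one_iff w).mpr this

lemma mk_eq {x y : FreeGroup (Fin n)} (h : x * y⁻¹ ∈ BnRels n) :
    PresentedGroup.mk (BnRels n) x = PresentedGroup.mk (BnRels n) y := by
  have := mk_rel h
  rw [map_mul, map_inv, mul_inv_eq_one] at this
  exact this

lemma rB_eq (i : ℕ) (h : i - 1 < n) : rB n i = PresentedGroup.of ⟨i - 1, h⟩ :=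
  dif_pos h

lemma braid_rel (i : ℕ) (h1 : 1 ≤ i) (h2 : i + 1 ≤ n - 1) :
    rB n i * rB n (i + 1) * rB n i = rB n (i + 1) * rB n i * rB n (i + 1) := by
  have hn : 2 ≤ n := by omega
  have ha : i - 1 < n := by omega
  have hb : i + 1 - 1 < n := by omega
  rw [rB_eq i ha, rB_eq (i + 1) hb]
  set a : Fin n := ⟨i - 1, ha⟩
  set b : Fin n := ⟨i + 1 - 1, hb⟩
  have hmem : (FreeGroup.of a * FreeGroup.of b * FreeGroup.of a) *
      (FreeGroup.of b * FreeGroup.of a * FreeGroup.of b)⁻¹ ∈ BnRels n := by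
    refine Or.inl ⟨a, b, ?_, ?_, rfl⟩
    · show (i - 1) + 1 = i + 1 - 1; omega
    · show (i + 1 - 1) + 1 < n; omega
  simpa [map_mul, PresentedGroup.of] using mk_eq hmem

lemma comm_rel (i j : ℕ) (h1 : 1 ≤ i) (h2 : i + 2 ≤ j) (h3 : j ≤ n) :
    Commute (rB n i) (rB n j) := by
  have ha : i - 1 < n := by omega
  have hb : j - 1 < n := by omega
  rw [rB_eq i ha, rB_eq j hb]
  have hmem : (FreeGroup.of (⟨i - 1, ha⟩ : Fin n) * FreeGroup.of (⟨j - 1, hb⟩ : Fin n)) *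
      (FreeGroup.of (⟨j - 1, hb⟩ : Fin n) * FreeGroup.of (⟨i - 1, ha⟩ : Fin n))⁻¹ ∈
      BnRels n := by
    refine Or.inr (Or.inr ⟨⟨i - 1, ha⟩, ⟨j - 1, hb⟩, ?_, rfl⟩)
    show (i - 1) + 2 ≤ j - 1; omega
  have := mk_eq hmem
  simpa [Commute, SemiconjBy, map_mul, PresentedGroup.of] using this

lemma four_rel (hn : 2 ≤ n) :
    rB n (n - 1) * rB n n * rB n (n - 1) * rB n n =
      rB n n * rB n (n - 1) * rB n n * rB n (n - 1) := by
  have ha : n - 1 - 1 < n := by omega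
  have hb : n - 1 < n := by omega
  rw [rB_eq (n - 1) ha, rB_eq n hb]
  have hmem : (FreeGroup.of (⟨n - 1 - 1, ha⟩ : Fin n) * FreeGroup.of (⟨n - 1, hb⟩ : Fin n) *
      FreeGroup.of (⟨n - 1 - 1, ha⟩ : Fin n) * FreeGroup.of (⟨n - 1, hb⟩ : Fin n)) *
      (FreeGroup.of (⟨n - 1, hb⟩ : Fin n) * FreeGroup.of (⟨n - 1 - 1, ha⟩ : Fin n) *
      FreeGroup.of (⟨n - 1, hb⟩ : Fin n) * FreeGroup.of (⟨n - 1 - 1, ha⟩ : Fin n))⁻¹ ∈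
      BnRels n := by
    refine Or.inr (Or.inl ⟨⟨n - 1 - 1, ha⟩, ⟨n - 1, hb⟩, ?_, ?_, rfl⟩)
    · show (n - 1 - 1) + 2 = n; omega
    · show (n - 1) + 1 = n; omega
  simpa [map_mul, PresentedGroup.of] using mk_eq hmem

/-- ascending product `r_1 r_2 ⋯ r_k` -/
def asc (n : ℕ) : ℕ → ArtinB n
  | 0 => 1
  | k + 1 => asc n k * rB n (k + 1)

/-- descending product `r_k r_{k-1} ⋯ r_1` -/
def desc (n : ℕ) : ℕ → ArtinB n
  | 0 => 1
  | k + 1 => rB n (k + 1) * desc n k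

/-- `d_k = r_k ⋯ r_1 · r_1 ⋯ r_k` -/
def dd (n k : ℕ) : ArtinB n := desc n k * asc n k

lemma dd_zero : dd n 0 = 1 := by simp [dd, desc, asc]

lemma dd_succ (k : ℕ) : dd n (k + 1) = rB n (k + 1) * dd n k * rB n (k + 1) := by
  simp [dd, desc, asc, mul_assoc]

/-- `d_k` commutes with `r_j` for `j ≥ k + 2`. -/
lemma comm_above : ∀ k j, k + 2 ≤ j → j ≤ n → Commute (rB n j) (dd n k)
  | 0, j, _, _ => by rw [dd_zero]; exact Commute.one_right _
  | k + 1, j, h2, h3 => by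
    rw [dd_succ]
    have h1 : Commute (rB n (k + 1)) (rB n j) := comm_rel (k + 1) j (by omega) (by omega) h3
    exact (h1.symm.mul_right (comm_above k j (by omega) h3)).mul_right h1.symm

/-- an element commuting with `r_1, …, r_k` commutes with `d_k`. -/
lemma comm_dd (x : ArtinB n) : ∀ k, (∀ j, 1 ≤ j → j ≤ k → Commute x (rB n j)) →
    Commute x (dd n k)
  | 0, _ => by rw [dd_zero]; exact Commute.one_right _
  | k + 1, h => by
    rw [dd_succ]
    have h1 : Commute x (rB n (k + 1)) := h (k + 1) (by omega) le_rfl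
    exact (h1.mul_right (comm_dd x k fun j hj1 hj2 => h j hj1 (by omega))).mul_right h1

/-- `d_k` commutes with `r_j` for `1 ≤ j < k` (for `k ≤ n - 1`). -/
lemma comm_below : ∀ k, k ≤ n - 1 → ∀ j, 1 ≤ j → j < k → Commute (rB n j) (dd n k)
  | 0, _, j, hj1, hj2 => absurd hj2 (by omega)
  | 1, _, j, hj1, hj2 => absurd hj2 (by omega)
  | k + 2, hk, j, hj1, hj2 => by
    rcases lt_or_eq_of_le (show j ≤ k + 1 by omega) with hj | hj
    · rw [dd_succ]
      have h1 : Commute (rB n j) (rB n (k + 2)) := comm_rel j (k + 2) hj1 (by omega) (by omega)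
      exact (h1.mul_right (comm_below (k + 1) (by omega) j hj1 hj)).mul_right h1
    · subst hj
      rw [dd_succ, dd_succ]
      set u := rB n (k + 1)
      set v := rB n (k + 2)
      set d := dd n k
      have b : u * v * u = v * u * v := braid_rel (k + 1) (by omega) (by omega)
      have hvd : v * d = d * v := comm_above k (k + 2) le_rfl (by omega)
      show u * (v * (u * d * u) * v) = v * (u * d * u) * v * u
      calc u * (v * (u * d * u) * v) = (u * v * u) * (d * (u * v)) := by
            simp only [mul_assoc]
        _ = (v * u * v) * (d * (u * v)) := by rw [b]
        _ = (v * u) * ((v * d) * (u * v)) := by simp only [mul_assoc]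
        _ = (v * u) * ((d * v) * (u * v)) := by rw [hvd]
        _ = ((v * u) * d) * (v * u * v) := by simp only [mul_assoc]
        _ = ((v * u) * d) * (u * v * u) := by rw [← b]
        _ = v * (u * d * u) * v * u := by simp only [mul_assoc]

lemma asc_eq : ∀ k, asc n (k + 1) = rB n 1 * ((List.range k).map fun i => rB n (i + 2)).prod
  | 0 => by simp [asc]
  | k + 1 => by
    rw [show asc n (k + 1 + 1) = asc n (k + 1) * rB n (k + 2) from rfl, asc_eq k,
      List.range_succ]
    simp [mul_assoc]

lemma desc_eq : ∀ k, desc n (k + 1) =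
    ((List.range k).map fun i => rB n (k + 1 - i)).prod * rB n 1
  | 0 => by simp [desc]
  | k + 1 => by
    rw [show desc n (k + 1 + 1) = rB n (k + 2) * desc n (k + 1) from rfl, desc_eq k,
      List.range_succ_eq_map]
    have : ((List.range k).map ((fun i => rB n (k + 1 + 1 - i)) ∘ Nat.succ)).prod =
        ((List.range k).map fun i => rB n (k + 1 - i)).prod := by
      congr 1
      apply List.map_congr_left
      intro i _
      show rB n (k + 2 - (i + 1)) = rB n (k + 1 - i)
      congr 1
      omega
    simp only [List.map_cons, List.prod_cons, List.map_map, this, mul_assoc]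
    norm_num

/-- the key abstract computation -/
lemma key_abstract {G : Type*} [Group G] (C t s : G)
    (hCs : C * s = s * C)
    (h4 : t * s * t * s = s * t * s * t)
    (hCD : C * (t * C * t) = (t * C * t) * C) :
    (t * C * t * s) * t⁻¹ * (t * C * t * s) * t⁻¹ =
      t⁻¹ * (t * C * t * s) * t⁻¹ * (t * C * t * s) := by
  have hCs' : s * (C * (t * s)) = C * (s * (t * s)) := by
    rw [← mul_assoc, ← hCs, mul_assoc]
  have hCs'' : s * (C * (t * (s * t))) = C * (s * (t * (s * t))) := by
    rw [← mul_assoc, ← hCs, mul_assoc]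
  have h4' : s * (t * (s * t)) = t * (s * (t * s)) := by
    have := h4.symm
    simp only [mul_assoc] at this
    exact this
  have hCD' : C * (t * (C * (t * (s * (t * s))))) =
      t * (C * (t * (C * (s * (t * s))))) := by
    have h := hCD
    simp only [mul_assoc] at h
    calc C * (t * (C * (t * (s * (t * s)))))
        = (C * (t * (C * t))) * (s * (t * s)) := by simp only [mul_assoc]
      _ = (t * (C * (t * C))) * (s * (t * s)) := by rw [h]
      _ = t * (C * (t * (C * (s * (t * s))))) := by simp only [mul_assoc]
  have main : C * (t * (s * (C * (t * (s * t))))) =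
      t * (C * (t * (s * (C * (t * s))))) := by
    calc C * (t * (s * (C * (t * (s * t)))))
        = C * (t * (C * (s * (t * (s * t))))) := by rw [hCs'']
      _ = C * (t * (C * (t * (s * (t * s))))) := by rw [h4']
      _ = t * (C * (t * (C * (s * (t * s))))) := by rw [hCD']
      _ = t * (C * (t * (s * (C * (t * s))))) := by rw [← hCs']
  calc (t * C * t * s) * t⁻¹ * (t * C * t * s) * t⁻¹
      = t * (C * (t * (s * (C * (t * s))))) * t⁻¹ := by group
    _ = (C * (t * (s * (C * (t * (s * t)))))) * t⁻¹ := by rw [← main]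
    _ = t⁻¹ * (t * C * t * s) * t⁻¹ * (t * C * t * s) := by group

end DeltaRnAux

/-- the elements `δ r_n` and `r_{n-1}⁻¹` satisfy the Artin relation of
length four in `A[Bₙ]`, `n ≥ 3`. -/
theorem delta_rn_artin_relation (n : ℕ) (hn : 3 ≤ n) :
    (δB n * rB n n) * (rB n (n - 1))⁻¹ * (δB n * rB n n) * (rB n (n - 1))⁻¹ =
      (rB n (n - 1))⁻¹ * (δB n * rB n n) * (rB n (n - 1))⁻¹ * (δB n * rB n n) := by
  open DeltaRnAux in
  obtain ⟨m, rfl⟩ : ∃ m, n = m + 3 := ⟨n - 3, by omega⟩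
  set n := m + 3 with hn3
  have hsub1 : n - 1 = m + 2 := by omega
  have hsub2 : n - 2 = m + 1 := by omega
  -- δB n = dd n (m + 2)
  have hδ : δB n = dd n (m + 2) := by
    have hL : (fun i => rB n (n - 1 - i)) = fun i => rB n (m + 2 - i) := by
      funext i
      have h : n - 1 - i = m + 2 - i := by omega
      rw [h]
    rw [δB, hsub2, hL, dd, desc_eq (m + 1), asc_eq (m + 1), sq]
    simp only [mul_assoc]
  have hC_s : dd n (m + 1) * rB n n = rB n n * dd n (m + 1) :=
    ((comm_above (m + 1) n (by omega) le_rfl).symm : Commute _ _)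
  have h4 : rB n (m + 2) * rB n n * rB n (m + 2) * rB n n =
      rB n n * rB n (m + 2) * rB n n * rB n (m + 2) := by
    have := four_rel (n := n) (by omega)
    rwa [hsub1] at this
  have hCD : dd n (m + 1) * dd n (m + 2) = dd n (m + 2) * dd n (m + 1) := by
    have : Commute (dd n (m + 2)) (dd n (m + 1)) := by
      apply comm_dd
      intro j hj1 hj2
      exact (comm_below (m + 2) (by omega) j hj1 (by omega)).symm
    exact this.symm
  have hdd : dd n (m + 2) = rB n (m + 2) * dd n (m + 1) * rB n (m + 2) := dd_succ (m + 1)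
  rw [hsub1, hδ, hdd]
  exact key_abstract (dd n (m + 1)) (rB n (m + 2)) (rB n n) hC_s h4 (by rw [← hdd]; exact hCD)
end

section
/- Let n ≥ 3, and in A[B_n] set Δ_{Y₁} = (r_1 r_2 ⋯ r_{n−2})(r_1 r_2 ⋯ r_{n−3}) ⋯ (r_1 r_2) r_1. Then Δ_Y · ρ_1 = Δ_{Y₁} and Δ_Y^{−1} · ρ_0 = Δ_{Y₁}^{−1}; moreover Δ_{Y₁}^{−1} r_n Δ_{Y₁} = r_n, and consequently δ = ρ_1^{−1} ρ_0 = Δ_{Y₁}^{−1} Δ_Y^2 Δ_{Y₁}^{−1}. -/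
/-- `Δ_{Y₁} = (r_1 ⋯ r_{n-2})(r_1 ⋯ r_{n-3}) ⋯ (r_1 r_2) r_1`, the Garside element of
the parabolic subgroup generated by `r_1, …, r_{n-2}`. -/
def ΔY₁ (n : ℕ) : ArtinB n :=
  ((List.range (n - 2)).map fun k =>
    ((List.range (n - 2 - k)).map fun i => rB n (i + 1)).prod).prod

/-!
Write `C_m = r_1 ⋯ r_m`, `R_m = r_m ⋯ r_1` and `Δ_m = C_m C_{m-1} ⋯ C_1`, so that
`Δ_Y = Δ_{n-1}`, `Δ_{Y₁} = Δ_{n-2}`, `ρ_0 = C_{n-1}` and `ρ_1⁻¹ = R_{n-1}`. By definition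
`Δ_{m+1} = C_{m+1} Δ_m`, and using only the commutation relations `r_i r_j = r_j r_i`
(`|i - j| ≥ 2`) also `Δ_{m+1} = Δ_m R_{m+1}`: inductively,
`Δ_{m+1} R_{m+2} = C_{m+1} Δ_m r_{m+2} R_{m+1} = C_{m+1} r_{m+2} Δ_m R_{m+1}
= C_{m+2} Δ_{m+1}`. These two factorisations of `Δ_{n-1}` are the first two identities;
`r_n` commutes with `r_1, …, r_{n-2}`, hence with `Δ_{n-2}`; `δ = R_{n-1} C_{n-1}` is a
regrouping of words, and the last identity follows by substitution.
-/

section FarCommuting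

variable {G : Type*} [Group G] (r : ℕ → G)

def ascProd (m : ℕ) : G := ((List.range m).map fun i => r (i + 1)).prod

def descProd (m : ℕ) : G := ((List.range m).map fun i => r (m - i)).prod

def garsideProd (m : ℕ) : G := ((List.range m).map fun k => ascProd r (m - k)).prod

lemma ascProd_succ (m : ℕ) : ascProd r (m + 1) = ascProd r m * r (m + 1) := by
  simp [ascProd, List.range_succ]

lemma ascProd_succ_eq_mul (m : ℕ) :
    ascProd r (m + 1) = r 1 * ((List.range m).map fun i => r (i + 2)).prod := by
  simp [ascProd, List.range_succ_eq_map, Function.comp_def]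

lemma descProd_succ (m : ℕ) : descProd r (m + 1) = r (m + 1) * descProd r m := by
  simp [descProd, List.range_succ_eq_map, Function.comp_def]

lemma descProd_succ_eq_mul (m : ℕ) :
    descProd r (m + 1) = ((List.range m).map fun i => r (m + 1 - i)).prod * r 1 := by
  simp [descProd, List.range_succ]

lemma garsideProd_succ (m : ℕ) :
    garsideProd r (m + 1) = ascProd r (m + 1) * garsideProd r m := by
  simp [garsideProd, List.range_succ_eq_map, Function.comp_def]

lemma prod_inv_eq_descProd_inv (m : ℕ) :
    ((List.range m).map fun i => (r (i + 1))⁻¹).prod = (descProd r m)⁻¹ := by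
  induction m with
  | zero => simp [descProd]
  | succ m ih => simp [List.range_succ, ih, descProd_succ]

variable {r}

lemma Commute.ascProd_left {m : ℕ} {x : G} (h : ∀ i, 1 ≤ i → i ≤ m → Commute (r i) x) :
    Commute (ascProd r m) x :=
  Commute.list_prod_left _ _ <| by
    simp only [List.mem_map, List.mem_range]
    rintro _ ⟨i, hi, rfl⟩
    exact h (i + 1) (by omega) (by omega)

lemma Commute.garsideProd_left {m : ℕ} {x : G} (h : ∀ i, 1 ≤ i → i ≤ m → Commute (r i) x) :
    Commute (garsideProd r m) x :=
  Commute.list_prod_left _ _ <| by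
    simp only [List.mem_map, List.mem_range]
    rintro _ ⟨k, hk, rfl⟩
    exact Commute.ascProd_left fun i hi hik => h i hi (by omega)

lemma garsideProd_mul_descProd {m : ℕ}
    (hfar : ∀ i j, 1 ≤ i → i + 2 ≤ j → j ≤ m + 1 → Commute (r i) (r j)) :
    garsideProd r m * descProd r (m + 1) = garsideProd r (m + 1) := by
  induction m with
  | zero => simp [garsideProd, descProd, ascProd]
  | succ m ih =>
    have hslide : Commute (garsideProd r m) (r (m + 2)) :=
      Commute.garsideProd_left fun i hi him => hfar i (m + 2) hi (by omega) le_rfl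
    calc garsideProd r (m + 1) * descProd r (m + 2)
        = ascProd r (m + 1) * (garsideProd r m * r (m + 2)) * descProd r (m + 1) := by
          rw [garsideProd_succ, descProd_succ]; group
      _ = ascProd r (m + 1) * r (m + 2) * (garsideProd r m * descProd r (m + 1)) := by
          rw [hslide.eq]; group
      _ = garsideProd r (m + 2) := by
          rw [ih fun i j hi hij hj => hfar i j hi hij (by omega), garsideProd_succ r (m + 1),
            ascProd_succ r (m + 1)]

end FarCommuting

lemma rB_commute_s19 {n i j : ℕ} (hi : 1 ≤ i) (hij : i + 2 ≤ j) (hj : j ≤ n) :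
    Commute (rB n i) (rB n j) := by
  have hi' : i - 1 < n := by omega
  have hj' : j - 1 < n := by omega
  simp only [rB, dif_pos hi', dif_pos hj']
  refine PresentedGroup.mk_eq_mk_of_mul_inv_mem (Or.inr (Or.inr ⟨_, _, ?_, rfl⟩))
  simp only
  omega

/-- `Δ_Y ρ_1 = Δ_{Y₁}`, `Δ_Y⁻¹ ρ_0 = Δ_{Y₁}⁻¹`,
`Δ_{Y₁}⁻¹ r_n Δ_{Y₁} = r_n`, and consequently
`δ = ρ_1⁻¹ ρ_0 = Δ_{Y₁}⁻¹ Δ_Y² Δ_{Y₁}⁻¹`, in `A[Bₙ]` for `n ≥ 3`. -/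
theorem deltaY1_identities (n : ℕ) (hn : 3 ≤ n) :
    ΔY n * ρ₁B n = ΔY₁ n ∧
    (ΔY n)⁻¹ * ρ₀B n = (ΔY₁ n)⁻¹ ∧
    (ΔY₁ n)⁻¹ * rB n n * ΔY₁ n = rB n n ∧
    δB n = (ρ₁B n)⁻¹ * ρ₀B n ∧
    δB n = (ΔY₁ n)⁻¹ * ΔY n ^ 2 * (ΔY₁ n)⁻¹ := by
  obtain ⟨m, rfl⟩ : ∃ m, n = m + 3 := ⟨n - 3, by omega⟩
  have hΔY : ΔY (m + 3) = garsideProd (rB (m + 3)) (m + 2) := rfl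
  have hΔY₁ : ΔY₁ (m + 3) = garsideProd (rB (m + 3)) (m + 1) := rfl
  have hρ₀ : ρ₀B (m + 3) = ascProd (rB (m + 3)) (m + 2) := rfl
  have hρ₁ : ρ₁B (m + 3) = (descProd (rB (m + 3)) (m + 2))⁻¹ :=
    prod_inv_eq_descProd_inv _ _
  have hstep : ΔY₁ (m + 3) * descProd (rB (m + 3)) (m + 2) = ΔY (m + 3) :=
    garsideProd_mul_descProd fun i j hi hij hj => rB_commute_s19 hi hij (by omega)
  have h₁ : ΔY (m + 3) * ρ₁B (m + 3) = ΔY₁ (m + 3) := by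
    rw [hρ₁, ← hstep, mul_inv_cancel_right]
  have h₂ : (ΔY (m + 3))⁻¹ * ρ₀B (m + 3) = (ΔY₁ (m + 3))⁻¹ := by
    rw [hΔY, hΔY₁, hρ₀, garsideProd_succ]; group
  have h₃ : (ΔY₁ (m + 3))⁻¹ * rB (m + 3) (m + 3) * ΔY₁ (m + 3) = rB (m + 3) (m + 3) := by
    have hc : Commute (ΔY₁ (m + 3)) (rB (m + 3) (m + 3)) :=
      Commute.garsideProd_left fun i hi him => rB_commute_s19 hi (by omega) le_rfl
    rw [mul_assoc, ← hc.eq, inv_mul_cancel_left]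
  have h₄ : δB (m + 3) = (ρ₁B (m + 3))⁻¹ * ρ₀B (m + 3) := by
    rw [hρ₁, hρ₀, inv_inv, descProd_succ_eq_mul, ascProd_succ_eq_mul]
    simp only [δB, pow_two, mul_assoc]
    rfl
  refine ⟨h₁, h₂, h₃, h₄, ?_⟩
  rw [h₄, eq_inv_mul_of_mul_eq h₁, eq_mul_of_inv_mul_eq h₂, pow_two]
  group
end
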